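/- arXiv:2306.16065 — 11 statements merged into one kernel-verified Lean document; each statement's English description precedes it below -/
import Mathlib

section
/- Let x be a sequence of length n, let 1 ≤ i ≤ n−1 with x[i] < x[i+1], and let y = τ(x,i). Then: (1) PD⃖_y[i] = 1; (2) PD⃗_y[i+1] = 0 if PD⃗_x[i] = 0, and PD⃗_y[i+1] = PD⃗_x[i] + 1 otherwise; (3) PD⃖_y[i+1] = 0 if PD⃖_x[i] = 0, and PD⃖_y[i+1] = PD⃖_x[i] − 1 otherwise; (4) PD⃗_y[i] ≤ i−1 if PD⃗_x[i] = 0, and PD⃗_y[i] ≤ PD⃗_x[i] otherwise. -/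
/-- A sequence of length `n`: a function `ℕ → ℤ` injective on positions `1,…,n`. -/
def IsSeq (n : ℕ) (x : ℕ → ℤ) : Prop := Set.InjOn x (Set.Icc 1 n)

/-- Parent-distance table: `fwdPD x i = i - max{ j | 1 ≤ j < i, x j < x i }` if such `j`
exists, `0` otherwise. -/
def fwdPD (x : ℕ → ℤ) (i : ℕ) : ℕ :=
  if h : ((Finset.Ico 1 i).filter (fun j => x j < x i)).Nonempty then
    i - ((Finset.Ico 1 i).filter (fun j => x j < x i)).max' h
  else 0

/-- Reverse parent-distance table: `revPD n x i = min{ j | i < j ≤ n, x j < x i } - i` if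
such `j` exists, `0` otherwise. -/
def revPD (n : ℕ) (x : ℕ → ℤ) (i : ℕ) : ℕ :=
  if h : ((Finset.Ioc i n).filter (fun j => x j < x i)).Nonempty then
    ((Finset.Ioc i n).filter (fun j => x j < x i)).min' h - i
  else 0

/-- The swap `τ(x,i)`: exchanges positions `i` and `i+1`. -/
def swapSeq (x : ℕ → ℤ) (i : ℕ) : ℕ → ℤ :=
  fun j => if j = i then x (i + 1) else if j = i + 1 then x i else x j

theorem stmt0 (n i : ℕ) (x y : ℕ → ℤ) (hx : IsSeq n x)
    (hi1 : 1 ≤ i) (hi2 : i + 1 ≤ n) (hlt : x i < x (i + 1))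
    (hy : y = swapSeq x i) :
    revPD n y i = 1 ∧
    fwdPD y (i + 1) = (if fwdPD x i = 0 then 0 else fwdPD x i + 1) ∧
    revPD n y (i + 1) = (if revPD n x i = 0 then 0 else revPD n x i - 1) ∧
    fwdPD y i ≤ (if fwdPD x i = 0 then i - 1 else fwdPD x i) := by
  subst hy
  have hyi : swapSeq x i i = x (i + 1) := by simp [swapSeq]
  have hyi1 : swapSeq x i (i + 1) = x i := by simp [swapSeq]
  have hyj : ∀ j, j ≠ i → j ≠ i + 1 → swapSeq x i j = x j := by
    intro j h1 h2; simp [swapSeq, h1, h2]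
  refine ⟨?_, ?_, ?_, ?_⟩
  · -- revPD n y i = 1
    unfold revPD
    have hmem : i + 1 ∈ (Finset.Ioc i n).filter
        (fun j => swapSeq x i j < swapSeq x i i) := by
      simp only [Finset.mem_filter, Finset.mem_Ioc, hyi, hyi1]
      exact ⟨⟨Nat.lt_succ_self i, hi2⟩, hlt⟩
    have hne : ((Finset.Ioc i n).filter
        (fun j => swapSeq x i j < swapSeq x i i)).Nonempty := ⟨_, hmem⟩
    rw [dif_pos hne]
    have hle : ((Finset.Ioc i n).filter
        (fun j => swapSeq x i j < swapSeq x i i)).min' hne = i + 1 := by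
      refine le_antisymm (Finset.min'_le _ _ hmem) (Finset.le_min' _ _ _ ?_)
      intro j hj
      have := (Finset.mem_filter.mp hj).1
      exact Nat.succ_le_of_lt (Finset.mem_Ioc.mp this).1
    rw [hle]; omega
  · -- fwdPD y (i+1)
    have hset : (Finset.Ico 1 (i + 1)).filter
        (fun j => swapSeq x i j < swapSeq x i (i + 1))
        = (Finset.Ico 1 i).filter (fun j => x j < x i) := by
      ext j
      simp only [Finset.mem_filter, Finset.mem_Ico, hyi1]
      constructor
      · rintro ⟨⟨h1, h2⟩, h3⟩
        rcases Nat.lt_or_ge j i with hl | hg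
        · have : swapSeq x i j = x j := hyj j (by omega) (by omega)
          rw [this] at h3
          exact ⟨⟨h1, hl⟩, h3⟩
        · have hji : j = i := by omega
          rw [hji, hyi] at h3
          exact absurd h3 (not_lt.mpr hlt.le)
      · rintro ⟨⟨h1, h2⟩, h3⟩
        have : swapSeq x i j = x j := hyj j (by omega) (by omega)
        rw [this]
        exact ⟨⟨h1, by omega⟩, h3⟩
    unfold fwdPD
    rw [hset]
    by_cases hS : ((Finset.Ico 1 i).filter (fun j => x j < x i)).Nonempty
    · rw [dif_pos hS, dif_pos hS]
      have hmax := Finset.max'_mem _ hS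
      have hlt' : ((Finset.Ico 1 i).filter (fun j => x j < x i)).max' hS < i :=
        (Finset.mem_Ico.mp (Finset.mem_filter.mp hmax).1).2
      rw [if_neg (by omega)]
      omega
    · rw [dif_neg hS, dif_neg hS, if_pos rfl]
  · -- revPD n y (i+1)
    have hset : (Finset.Ioc (i + 1) n).filter
        (fun j => swapSeq x i j < swapSeq x i (i + 1))
        = (Finset.Ioc i n).filter (fun j => x j < x i) := by
      ext j
      simp only [Finset.mem_filter, Finset.mem_Ioc, hyi1]
      constructor
      · rintro ⟨⟨h1, h2⟩, h3⟩
        have : swapSeq x i j = x j := hyj j (by omega) (by omega)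
        rw [this] at h3
        exact ⟨⟨by omega, h2⟩, h3⟩
      · rintro ⟨⟨h1, h2⟩, h3⟩
        have hji : j ≠ i + 1 := by
          intro h; rw [h] at h3; exact absurd h3 (not_lt.mpr hlt.le)
        have : swapSeq x i j = x j := hyj j (by omega) hji
        rw [this]
        exact ⟨⟨by omega, h2⟩, h3⟩
    unfold revPD
    rw [hset]
    by_cases hS : ((Finset.Ioc i n).filter (fun j => x j < x i)).Nonempty
    · rw [dif_pos hS, dif_pos hS]
      have hmin := Finset.min'_mem _ hS
      have hm1 : i < ((Finset.Ioc i n).filter (fun j => x j < x i)).min' hS :=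
        (Finset.mem_Ioc.mp (Finset.mem_filter.mp hmin).1).1
      have hm2 : ((Finset.Ioc i n).filter (fun j => x j < x i)).min' hS ≠ i + 1 := by
        intro h
        have := (Finset.mem_filter.mp hmin).2
        rw [h] at this
        exact absurd this (not_lt.mpr hlt.le)
      rw [if_neg (by omega)]
      omega
    · rw [dif_neg hS, dif_neg hS, if_pos rfl]
  · -- fwdPD y i bound
    unfold fwdPD
    have hset : (Finset.Ico 1 i).filter (fun j => swapSeq x i j < swapSeq x i i)
        = (Finset.Ico 1 i).filter (fun j => x j < x (i + 1)) := by
      ext j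
      simp only [Finset.mem_filter, Finset.mem_Ico, hyi]
      constructor
      · rintro ⟨⟨h1, h2⟩, h3⟩
        have : swapSeq x i j = x j := hyj j (by omega) (by omega)
        rw [this] at h3
        exact ⟨⟨h1, h2⟩, h3⟩
      · rintro ⟨⟨h1, h2⟩, h3⟩
        have : swapSeq x i j = x j := hyj j (by omega) (by omega)
        rw [this]
        exact ⟨⟨h1, h2⟩, h3⟩
    rw [hset]
    by_cases hT : ((Finset.Ico 1 i).filter (fun j => x j < x (i + 1))).Nonempty
    · rw [dif_pos hT]
      have hmaxT := Finset.max'_mem _ hT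
      have hT1 : 1 ≤ ((Finset.Ico 1 i).filter (fun j => x j < x (i + 1))).max' hT :=
        (Finset.mem_Ico.mp (Finset.mem_filter.mp hmaxT).1).1
      by_cases hS : ((Finset.Ico 1 i).filter (fun j => x j < x i)).Nonempty
      · simp only [dif_pos hS]
        have hmax := Finset.max'_mem _ hS
        have hlt' : ((Finset.Ico 1 i).filter (fun j => x j < x i)).max' hS < i :=
          (Finset.mem_Ico.mp (Finset.mem_filter.mp hmax).1).2
        have hsub : (Finset.Ico 1 i).filter (fun j => x j < x i)
            ⊆ (Finset.Ico 1 i).filter (fun j => x j < x (i + 1)) := by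
          intro j hj
          rw [Finset.mem_filter] at hj ⊢
          exact ⟨hj.1, hj.2.trans hlt⟩
        have hmm : ((Finset.Ico 1 i).filter (fun j => x j < x i)).max' hS
            ≤ ((Finset.Ico 1 i).filter (fun j => x j < x (i + 1))).max' hT :=
          Finset.max'_subset _ hsub
        rw [if_neg (by omega)]
        omega
      · simp only [dif_neg hS, if_pos rfl, if_true]
        omega
    · rw [dif_neg hT]
      exact Nat.zero_le _
end

section
/- Let x be a sequence of length n, let 1 ≤ i ≤ n−1 with x[i] > x[i+1], and let y = τ(x,i). Then: (1) PD⃗_y[i+1] = 1; (2) PD⃖_y[i] = 0 if PD⃖_x[i+1] = 0, and PD⃖_y[i] = PD⃖_x[i+1] + 1 otherwise; (3) PD⃗_y[i] = 0 if PD⃗_x[i+1] = 0, and PD⃗_y[i] = PD⃗_x[i+1] − 1 otherwise; (4) PD⃖_y[i+1] ≤ n−i−1 if PD⃖_x[i+1] = 0, and PD⃖_y[i+1] ≤ PD⃖_x[i+1] otherwise. -/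
theorem stmt1 (n i : ℕ) (x y : ℕ → ℤ) (hx : IsSeq n x)
    (hi1 : 1 ≤ i) (hi2 : i + 1 ≤ n) (hgt : x (i + 1) < x i)
    (hy : y = swapSeq x i) :
    fwdPD y (i + 1) = 1 ∧
    revPD n y i = (if revPD n x (i + 1) = 0 then 0 else revPD n x (i + 1) + 1) ∧
    fwdPD y i = (if fwdPD x (i + 1) = 0 then 0 else fwdPD x (i + 1) - 1) ∧
    revPD n y (i + 1) ≤ (if revPD n x (i + 1) = 0 then n - i - 1 else revPD n x (i + 1)) := by
  subst hy
  have hyi : swapSeq x i i = x (i + 1) := by simp [swapSeq]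
  have hyi1 : swapSeq x i (i + 1) = x i := by simp [swapSeq]
  have hyj : ∀ j, j ≠ i → j ≠ i + 1 → swapSeq x i j = x j := by
    intro j h1 h2; simp [swapSeq, h1, h2]
  refine ⟨?_, ?_, ?_, ?_⟩
  · -- part 1
    unfold fwdPD
    have hmem : i ∈ (Finset.Ico 1 (i + 1)).filter
        (fun j => swapSeq x i j < swapSeq x i (i + 1)) := by
      simp only [Finset.mem_filter, Finset.mem_Ico]
      exact ⟨⟨hi1, by omega⟩, by rw [hyi, hyi1]; exact hgt⟩
    have hne : ((Finset.Ico 1 (i + 1)).filter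
        (fun j => swapSeq x i j < swapSeq x i (i + 1))).Nonempty := ⟨i, hmem⟩
    rw [dif_pos hne]
    have hle : ((Finset.Ico 1 (i + 1)).filter
        (fun j => swapSeq x i j < swapSeq x i (i + 1))).max' hne ≤ i := by
      apply Finset.max'_le
      intro j hj
      simp only [Finset.mem_filter, Finset.mem_Ico] at hj
      omega
    have hge := Finset.le_max' _ i hmem
    omega
  · -- part 2
    unfold revPD
    have hset : (Finset.Ioc i n).filter (fun j => swapSeq x i j < swapSeq x i i)
        = (Finset.Ioc (i + 1) n).filter (fun j => x j < x (i + 1)) := by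
      ext j
      simp only [Finset.mem_filter, Finset.mem_Ioc]
      constructor
      · rintro ⟨⟨h1, h2⟩, h3⟩
        rw [hyi] at h3
        by_cases hji : j = i + 1
        · subst hji; rw [hyi1] at h3; exact absurd h3 (not_lt.2 hgt.le)
        · rw [hyj j (by omega) hji] at h3
          exact ⟨⟨by omega, h2⟩, h3⟩
      · rintro ⟨⟨h1, h2⟩, h3⟩
        rw [hyi, hyj j (by omega) (by omega)]
        exact ⟨⟨by omega, h2⟩, h3⟩
    rw [hset]
    by_cases hne : ((Finset.Ioc (i + 1) n).filter (fun j => x j < x (i + 1))).Nonempty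
    · rw [dif_pos hne, dif_pos hne]
      have hm := Finset.min'_mem _ hne
      simp only [Finset.mem_filter, Finset.mem_Ioc] at hm
      rw [if_neg (by omega)]
      omega
    · rw [dif_neg hne, dif_neg hne]
      simp
  · -- part 3
    unfold fwdPD
    have hset : (Finset.Ico 1 i).filter (fun j => swapSeq x i j < swapSeq x i i)
        = (Finset.Ico 1 (i + 1)).filter (fun j => x j < x (i + 1)) := by
      ext j
      simp only [Finset.mem_filter, Finset.mem_Ico]
      constructor
      · rintro ⟨⟨h1, h2⟩, h3⟩
        rw [hyi, hyj j (by omega) (by omega)] at h3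
        exact ⟨⟨h1, by omega⟩, h3⟩
      · rintro ⟨⟨h1, h2⟩, h3⟩
        by_cases hji : j = i
        · subst hji; exact absurd h3 (not_lt.2 hgt.le)
        · rw [hyi, hyj j hji (by omega)]
          exact ⟨⟨h1, by omega⟩, h3⟩
    rw [hset]
    by_cases hne : ((Finset.Ico 1 (i + 1)).filter (fun j => x j < x (i + 1))).Nonempty
    · rw [dif_pos hne, dif_pos hne]
      have hm := Finset.max'_mem _ hne
      simp only [Finset.mem_filter, Finset.mem_Ico] at hm
      rw [if_neg (by omega)]
      omega
    · rw [dif_neg hne, dif_neg hne]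
      simp
  · -- part 4
    unfold revPD
    have hsub : (Finset.Ioc (i + 1) n).filter (fun j => x j < x (i + 1))
        ⊆ (Finset.Ioc (i + 1) n).filter (fun j => swapSeq x i j < swapSeq x i (i + 1)) := by
      intro j hj
      simp only [Finset.mem_filter, Finset.mem_Ioc] at hj ⊢
      obtain ⟨⟨h1, h2⟩, h3⟩ := hj
      rw [hyi1, hyj j (by omega) (by omega)]
      exact ⟨⟨h1, h2⟩, h3.trans hgt⟩
    by_cases hnx : ((Finset.Ioc (i + 1) n).filter (fun j => x j < x (i + 1))).Nonempty
    · rw [dif_pos hnx]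
      have hny : ((Finset.Ioc (i + 1) n).filter
          (fun j => swapSeq x i j < swapSeq x i (i + 1))).Nonempty :=
        hnx.mono hsub
      rw [dif_pos hny]
      have hmx := Finset.min'_mem _ hnx
      have hle := Finset.min'_le _ _ (hsub hmx)
      simp only [Finset.mem_filter, Finset.mem_Ioc] at hmx
      rw [if_neg (by omega)]
      omega
    · rw [dif_neg hnx, if_pos rfl]
      by_cases hny : ((Finset.Ioc (i + 1) n).filter
          (fun j => swapSeq x i j < swapSeq x i (i + 1))).Nonempty
      · rw [dif_pos hny]
        have hm := Finset.min'_mem _ hny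
        simp only [Finset.mem_filter, Finset.mem_Ioc] at hm
        omega
      · rw [dif_neg hny]; omega
end

section
/- Let x be a sequence of length n, let 1 ≤ i ≤ n−1, and let y = τ(x,i). For every j ∈ {1,…,n} \ {i, i+1}: if PD⃗_x[j] ∉ {j−i−1, j−i} then PD⃗_x[j] = PD⃗_y[j], and if PD⃖_x[j] ∉ {i−j, i+1−j} then PD⃖_x[j] = PD⃖_y[j]. -/
lemma swapSeq_apply (x : ℕ → ℤ) (i k : ℕ) :
    swapSeq x i k = x (Equiv.swap i (i+1) k) := by
  unfold swapSeq
  rcases eq_or_ne k i with rfl | h1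
  · simp
  rcases eq_or_ne k (i+1) with rfl | h2
  · simp [h1]
  · rw [if_neg h1, if_neg h2, Equiv.swap_apply_of_ne_of_ne h1 h2]

lemma fwdPD_congr (x y : ℕ → ℤ) (j : ℕ) (h : ∀ k ≤ j, y k = x k) :
    fwdPD y j = fwdPD x j := by
  unfold fwdPD
  have hset : (Finset.Ico 1 j).filter (fun k => y k < y j) =
      (Finset.Ico 1 j).filter (fun k => x k < x j) := by
    apply Finset.filter_congr
    intro k hk
    simp only [Finset.mem_Ico] at hk
    rw [h k (by omega), h j le_rfl]
  rw [hset]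

lemma revPD_congr (n : ℕ) (x y : ℕ → ℤ) (j : ℕ) (h : ∀ k, j ≤ k → k ≤ n → y k = x k)
    (hj : j ≤ n) :
    revPD n y j = revPD n x j := by
  unfold revPD
  have hset : (Finset.Ioc j n).filter (fun k => y k < y j) =
      (Finset.Ioc j n).filter (fun k => x k < x j) := by
    apply Finset.filter_congr
    intro k hk
    simp only [Finset.mem_Ioc] at hk
    rw [h k (by omega) hk.2, h j le_rfl hj]
  rw [hset]

lemma fwd_key (i j : ℕ) (x : ℕ → ℤ) (hi : 1 ≤ i) (hij : i + 1 < j)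
    (h1 : (fwdPD x j : ℤ) ≠ (j:ℤ) - i - 1) (h2 : (fwdPD x j : ℤ) ≠ (j:ℤ) - i) :
    fwdPD x j = fwdPD (swapSeq x i) j := by
  have hyj : swapSeq x i j = x j := by
    unfold swapSeq; rw [if_neg (by omega), if_neg (by omega)]
  have hmem : ∀ k, (k ∈ (Finset.Ico 1 j).filter (fun k => swapSeq x i k < swapSeq x i j))
      ↔ Equiv.swap i (i+1) k ∈ (Finset.Ico 1 j).filter (fun k => x k < x j) := by
    intro k
    simp only [Finset.mem_filter, Finset.mem_Ico, hyj, swapSeq_apply]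
    constructor
    · rintro ⟨hk, hlt⟩
      refine ⟨?_, hlt⟩
      rcases eq_or_ne k i with rfl | hk1
      · rw [Equiv.swap_apply_left]; omega
      rcases eq_or_ne k (i+1) with rfl | hk2
      · rw [Equiv.swap_apply_right]; omega
      · rw [Equiv.swap_apply_of_ne_of_ne hk1 hk2]; omega
    · rintro ⟨hk, hlt⟩
      refine ⟨?_, hlt⟩
      rcases eq_or_ne k i with rfl | hk1
      · rw [Equiv.swap_apply_left] at hk; omega
      rcases eq_or_ne k (i+1) with rfl | hk2
      · rw [Equiv.swap_apply_right] at hk; omega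
      · rw [Equiv.swap_apply_of_ne_of_ne hk1 hk2] at hk; omega
  by_cases hne : ((Finset.Ico 1 j).filter (fun k => x k < x j)).Nonempty
  · have hm := ((Finset.Ico 1 j).filter (fun k => x k < x j)).max'_mem hne
    set m := ((Finset.Ico 1 j).filter (fun k => x k < x j)).max' hne with hmdef
    have hmj : m < j := (Finset.mem_Ico.mp (Finset.mem_filter.mp hm).1).2
    have hfx : fwdPD x j = j - m := by rw [fwdPD, dif_pos hne]
    have hmi1 : m ≠ i := by
      intro hcontra; apply h2; rw [hfx, hcontra]; omega
    have hmi2 : m ≠ i + 1 := by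
      intro hcontra; apply h1; rw [hfx, hcontra]; omega
    have hσm : Equiv.swap i (i+1) m = m := Equiv.swap_apply_of_ne_of_ne hmi1 hmi2
    have hmSy : m ∈ (Finset.Ico 1 j).filter (fun k => swapSeq x i k < swapSeq x i j) := by
      rw [hmem m, hσm]; exact hm
    have hne' : ((Finset.Ico 1 j).filter
        (fun k => swapSeq x i k < swapSeq x i j)).Nonempty := ⟨m, hmSy⟩
    have hmax : ((Finset.Ico 1 j).filter
        (fun k => swapSeq x i k < swapSeq x i j)).max' hne' = m := by
      apply le_antisymm
      · apply Finset.max'_le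
        intro k hk
        rw [hmem k] at hk
        rcases eq_or_ne k i with rfl | hk1
        · rw [Equiv.swap_apply_left] at hk
          have hle := Finset.le_max' _ _ hk; omega
        rcases eq_or_ne k (i+1) with rfl | hk2
        · rw [Equiv.swap_apply_right] at hk
          have hle := Finset.le_max' _ _ hk; omega
        · rw [Equiv.swap_apply_of_ne_of_ne hk1 hk2] at hk
          have hle := Finset.le_max' _ _ hk; omega
      · exact Finset.le_max' _ m hmSy
    rw [fwdPD, fwdPD, dif_pos hne, dif_pos hne', hmax]
  · have hne' : ¬ ((Finset.Ico 1 j).filter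
        (fun k => swapSeq x i k < swapSeq x i j)).Nonempty := by
      rintro ⟨k, hk⟩
      exact hne ⟨_, (hmem k).mp hk⟩
    rw [fwdPD, fwdPD, dif_neg hne, dif_neg hne']

lemma rev_key (n i j : ℕ) (x : ℕ → ℤ) (hij : j < i) (hn : i + 1 ≤ n)
    (h1 : (revPD n x j : ℤ) ≠ (i:ℤ) - j) (h2 : (revPD n x j : ℤ) ≠ (i:ℤ) + 1 - j) :
    revPD n x j = revPD n (swapSeq x i) j := by
  have hyj : swapSeq x i j = x j := by
    unfold swapSeq; rw [if_neg (by omega), if_neg (by omega)]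
  have hmem : ∀ k, (k ∈ (Finset.Ioc j n).filter (fun k => swapSeq x i k < swapSeq x i j))
      ↔ Equiv.swap i (i+1) k ∈ (Finset.Ioc j n).filter (fun k => x k < x j) := by
    intro k
    simp only [Finset.mem_filter, Finset.mem_Ioc, hyj, swapSeq_apply]
    constructor
    · rintro ⟨hk, hlt⟩
      refine ⟨?_, hlt⟩
      rcases eq_or_ne k i with rfl | hk1
      · rw [Equiv.swap_apply_left]; omega
      rcases eq_or_ne k (i+1) with rfl | hk2
      · rw [Equiv.swap_apply_right]; omega
      · rw [Equiv.swap_apply_of_ne_of_ne hk1 hk2]; omega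
    · rintro ⟨hk, hlt⟩
      refine ⟨?_, hlt⟩
      rcases eq_or_ne k i with rfl | hk1
      · rw [Equiv.swap_apply_left] at hk; omega
      rcases eq_or_ne k (i+1) with rfl | hk2
      · rw [Equiv.swap_apply_right] at hk; omega
      · rw [Equiv.swap_apply_of_ne_of_ne hk1 hk2] at hk; omega
  by_cases hne : ((Finset.Ioc j n).filter (fun k => x k < x j)).Nonempty
  · have hm := ((Finset.Ioc j n).filter (fun k => x k < x j)).min'_mem hne
    set m := ((Finset.Ioc j n).filter (fun k => x k < x j)).min' hne with hmdef
    have hmj : j < m := (Finset.mem_Ioc.mp (Finset.mem_filter.mp hm).1).1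
    have hfx : revPD n x j = m - j := by rw [revPD, dif_pos hne]
    have hmi1 : m ≠ i := by
      intro hcontra; apply h1; rw [hfx, hcontra]; omega
    have hmi2 : m ≠ i + 1 := by
      intro hcontra; apply h2; rw [hfx, hcontra]; omega
    have hσm : Equiv.swap i (i+1) m = m := Equiv.swap_apply_of_ne_of_ne hmi1 hmi2
    have hmSy : m ∈ (Finset.Ioc j n).filter (fun k => swapSeq x i k < swapSeq x i j) := by
      rw [hmem m, hσm]; exact hm
    have hne' : ((Finset.Ioc j n).filter
        (fun k => swapSeq x i k < swapSeq x i j)).Nonempty := ⟨m, hmSy⟩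
    have hmin : ((Finset.Ioc j n).filter
        (fun k => swapSeq x i k < swapSeq x i j)).min' hne' = m := by
      apply le_antisymm
      · exact Finset.min'_le _ m hmSy
      · apply Finset.le_min'
        intro k hk
        rw [hmem k] at hk
        rcases eq_or_ne k i with rfl | hk1
        · rw [Equiv.swap_apply_left] at hk
          have hle := Finset.min'_le _ _ hk; omega
        rcases eq_or_ne k (i+1) with rfl | hk2
        · rw [Equiv.swap_apply_right] at hk
          have hle := Finset.min'_le _ _ hk; omega
        · rw [Equiv.swap_apply_of_ne_of_ne hk1 hk2] at hk
          have hle := Finset.min'_le _ _ hk; omega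
    rw [revPD, revPD, dif_pos hne, dif_pos hne', hmin]
  · have hne' : ¬ ((Finset.Ioc j n).filter
        (fun k => swapSeq x i k < swapSeq x i j)).Nonempty := by
      rintro ⟨k, hk⟩
      exact hne ⟨_, (hmem k).mp hk⟩
    rw [revPD, revPD, dif_neg hne, dif_neg hne']

theorem stmt3 (n i : ℕ) (x y : ℕ → ℤ) (hx : IsSeq n x)
    (hi1 : 1 ≤ i) (hi2 : i + 1 ≤ n) (hy : y = swapSeq x i) :
    ∀ j, 1 ≤ j → j ≤ n → j ≠ i → j ≠ i + 1 →
      (((fwdPD x j : ℤ) ≠ (j : ℤ) - i - 1 ∧ (fwdPD x j : ℤ) ≠ (j : ℤ) - i) →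
        fwdPD x j = fwdPD y j) ∧
      (((revPD n x j : ℤ) ≠ (i : ℤ) - j ∧ (revPD n x j : ℤ) ≠ (i : ℤ) + 1 - j) →
        revPD n x j = revPD n y j) := by
  intro j hj1 hjn hji hji1
  subst hy
  rcases Nat.lt_or_ge j i with hlt | hge
  · constructor
    · intro _
      refine (fwdPD_congr x (swapSeq x i) j ?_).symm
      intro k hk
      unfold swapSeq
      rw [if_neg (by omega), if_neg (by omega)]
    · intro ⟨h1, h2⟩
      exact rev_key n i j x hlt hi2 h1 h2
  · have hgt : i + 1 < j := by omega
    constructor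
    · intro ⟨h1, h2⟩
      exact fwd_key i j x hi1 hgt h1 h2
    · intro _
      refine (revPD_congr n x (swapSeq x i) j ?_ hjn).symm
      intro k hk1 hk2
      unfold swapSeq
      rw [if_neg (by omega), if_neg (by omega)]
end

section
/- Let x be a sequence of length n, let 1 ≤ i ≤ n−1, let y = τ(x,i), and let r be defined by: r = PD⃖_x[i] if x[i] < x[i+1] and PD⃖_x[i] > 1; r = PD⃖_x[i+1] + 1 if x[i] > x[i+1] and PD⃖_x[i+1] > 0; and r = n−i+1 otherwise. Then the forward blue zones coincide: PD⃗_x[j] = PD⃗_y[j] for every j with i+r ≤ j ≤ n. -/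
lemma revPD_mem (n : ℕ) (x : ℕ → ℤ) (i : ℕ) (h : 0 < revPD n x i) :
    i + revPD n x i ∈ (Finset.Ioc i n).filter (fun j => x j < x i) := by
  unfold revPD at h ⊢
  split_ifs at h ⊢ with hne
  · have hmem := Finset.min'_mem _ hne
    have hgt : i < ((Finset.Ioc i n).filter (fun j => x j < x i)).min' hne :=
      (Finset.mem_Ioc.mp (Finset.mem_filter.mp hmem).1).1
    have he : i + (((Finset.Ioc i n).filter (fun j => x j < x i)).min' hne - i)
        = ((Finset.Ioc i n).filter (fun j => x j < x i)).min' hne := by omega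
    rw [he]
    exact hmem
  · omega

lemma key (i p j : ℕ) (x : ℕ → ℤ)
    (hp : i + 2 ≤ p) (hpj : p ≤ j)
    (h1 : x p < x i) (h2 : x p < x (i + 1)) :
    fwdPD x j = fwdPD (swapSeq x i) j := by
  set y := swapSeq x i with hy
  have hyj : y j = x j := by
    simp only [hy, swapSeq]; rw [if_neg (by omega), if_neg (by omega)]
  have hyp : y p = x p := by
    simp only [hy, swapSeq]; rw [if_neg (by omega), if_neg (by omega)]
  by_cases hc : x p < x j
  · have hplt : p < j := by
      rcases lt_or_eq_of_le hpj with h | h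
      · exact h
      · subst h; exact absurd hc (lt_irrefl _)
    have hpS : p ∈ (Finset.Ico 1 j).filter (fun k => x k < x j) :=
      Finset.mem_filter.mpr ⟨Finset.mem_Ico.mpr ⟨by omega, hplt⟩, hc⟩
    have hpT : p ∈ (Finset.Ico 1 j).filter (fun k => y k < y j) :=
      Finset.mem_filter.mpr ⟨Finset.mem_Ico.mpr ⟨by omega, hplt⟩, by rw [hyp, hyj]; exact hc⟩
    have hS : ((Finset.Ico 1 j).filter (fun k => x k < x j)).Nonempty := ⟨p, hpS⟩
    have hT : ((Finset.Ico 1 j).filter (fun k => y k < y j)).Nonempty := ⟨p, hpT⟩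
    have agree : ∀ k, i + 1 < k → (x k < x j ↔ y k < y j) := by
      intro k hk
      have hk' : y k = x k := by
        simp only [hy, swapSeq]; rw [if_neg (by omega), if_neg (by omega)]
      rw [hyj, hk']
    have hmax : ((Finset.Ico 1 j).filter (fun k => x k < x j)).max' hS
        = ((Finset.Ico 1 j).filter (fun k => y k < y j)).max' hT := by
      apply le_antisymm
      · apply Finset.le_max'
        have hm := Finset.max'_mem _ hS
        have hge : p ≤ ((Finset.Ico 1 j).filter (fun k => x k < x j)).max' hS :=
          Finset.le_max' _ _ hpS
        obtain ⟨hIco, hlt⟩ := Finset.mem_filter.mp hm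
        exact Finset.mem_filter.mpr ⟨hIco, (agree _ (by omega)).mp hlt⟩
      · apply Finset.le_max'
        have hm := Finset.max'_mem _ hT
        have hge : p ≤ ((Finset.Ico 1 j).filter (fun k => y k < y j)).max' hT :=
          Finset.le_max' _ _ hpT
        obtain ⟨hIco, hlt⟩ := Finset.mem_filter.mp hm
        exact Finset.mem_filter.mpr ⟨hIco, (agree _ (by omega)).mpr hlt⟩
    unfold fwdPD
    rw [dif_pos hS, dif_pos hT, hmax]
  · have hfe : (Finset.Ico 1 j).filter (fun k => y k < y j)
        = (Finset.Ico 1 j).filter (fun k => x k < x j) := by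
      apply Finset.filter_congr
      intro k hk
      rw [hyj]
      simp only [hy, swapSeq]
      split_ifs with e1 e2
      · subst e1
        constructor <;> intro h <;> omega
      · subst e2
        constructor <;> intro h <;> omega
      · rfl
    unfold fwdPD
    rw [hfe]

theorem stmt4 (n i r : ℕ) (x y : ℕ → ℤ) (hx : IsSeq n x)
    (hi1 : 1 ≤ i) (hi2 : i + 1 ≤ n) (hy : y = swapSeq x i)
    (hr : r = if x i < x (i + 1) ∧ 1 < revPD n x i then revPD n x i
          else if x (i + 1) < x i ∧ 0 < revPD n x (i + 1) then revPD n x (i + 1) + 1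
          else n - i + 1) :
    ∀ j, i + r ≤ j → j ≤ n → fwdPD x j = fwdPD y j := by
  intro j hij hjn
  subst hy
  split_ifs at hr with c1 c2
  · obtain ⟨hlt, hrev⟩ := c1
    have hmem := revPD_mem n x i (by omega)
    rw [Finset.mem_filter, Finset.mem_Ioc] at hmem
    have he : i + r = i + revPD n x i := by omega
    exact key i (i + r) j x (by omega) hij
      (by rw [he]; exact hmem.2) (by rw [he]; exact lt_trans hmem.2 hlt)
  · obtain ⟨hlt, hrev⟩ := c2
    have hmem := revPD_mem n x (i + 1) hrev
    rw [Finset.mem_filter, Finset.mem_Ioc] at hmem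
    have he : i + r = i + 1 + revPD n x (i + 1) := by omega
    exact key i (i + r) j x (by omega) hij
      (by rw [he]; exact lt_trans hmem.2 hlt) (by rw [he]; exact hmem.2)
  · omega
end

section
/- Let x be a sequence of length n, let 1 ≤ i ≤ n−1, let y = τ(x,i), and let ℓ be defined by: ℓ = PD⃗_x[i] if x[i] < x[i+1] and PD⃗_x[i] > 0; ℓ = PD⃗_x[i+1] − 1 if x[i] > x[i+1] and PD⃗_x[i+1] > 1; and ℓ = i otherwise. Then the reverse blue zones coincide: PD⃖_x[j] = PD⃖_y[j] for every j with 1 ≤ j ≤ i−ℓ. -/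
theorem stmt5 (n i l : ℕ) (x y : ℕ → ℤ) (hx : IsSeq n x)
    (hi1 : 1 ≤ i) (hi2 : i + 1 ≤ n) (hy : y = swapSeq x i)
    (hl : l = if x i < x (i + 1) ∧ 0 < fwdPD x i then fwdPD x i
          else if x (i + 1) < x i ∧ 1 < fwdPD x (i + 1) then fwdPD x (i + 1) - 1
          else i) :
    ∀ j, 1 ≤ j → j ≤ i - l → revPD n x j = revPD n y j := by
  intro j hj1 hj2
  have key : j < i ∧ (x i < x j ∨ x (i+1) < x j →
      ∃ k, j < k ∧ k < i ∧ x k < x j) := by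
    split_ifs at hl with h1 h2
    · obtain ⟨hlt, hpos⟩ := h1
      have hne : ((Finset.Ico 1 i).filter (fun k => x k < x i)).Nonempty := by
        by_contra hcon
        rw [fwdPD, dif_neg hcon] at hpos
        exact absurd hpos (by omega)
      set k0 := ((Finset.Ico 1 i).filter (fun k => x k < x i)).max' hne with hk0
      have hmem := Finset.max'_mem _ hne
      rw [← hk0, Finset.mem_filter, Finset.mem_Ico] at hmem
      have hfd : fwdPD x i = i - k0 := by rw [fwdPD, dif_pos hne]
      have hjk0 : j ≤ k0 := by omega
      refine ⟨by omega, fun hyp => ?_⟩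
      have hxixj : x i < x j := by
        rcases hyp with h | h
        · exact h
        · linarith
      have hjne : j ≠ k0 := by
        intro h; rw [← h] at hmem; linarith [hmem.2]
      exact ⟨k0, by omega, hmem.1.2, by linarith [hmem.2]⟩
    · obtain ⟨hlt, hpos⟩ := h2
      have hne : ((Finset.Ico 1 (i+1)).filter (fun k => x k < x (i+1))).Nonempty := by
        by_contra hcon
        rw [fwdPD, dif_neg hcon] at hpos
        exact absurd hpos (by omega)
      set k0 := ((Finset.Ico 1 (i+1)).filter (fun k => x k < x (i+1))).max' hne with hk0
      have hmem := Finset.max'_mem _ hne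
      rw [← hk0, Finset.mem_filter, Finset.mem_Ico] at hmem
      have hfd : fwdPD x (i+1) = (i+1) - k0 := by rw [fwdPD, dif_pos hne]
      have hk0le : k0 < i + 1 := hmem.1.2
      have hk0i : k0 < i := by omega
      have hjk0 : j ≤ k0 := by omega
      refine ⟨by omega, fun hyp => ?_⟩
      have hxixj : x (i+1) < x j := by
        rcases hyp with h | h
        · linarith
        · exact h
      have hjne : j ≠ k0 := by
        intro h; rw [← h] at hmem; linarith [hmem.2]
      exact ⟨k0, by omega, hk0i, by linarith [hmem.2]⟩
    · exact absurd hj2 (by omega)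
  obtain ⟨hji, hK⟩ := key
  have hyj : y j = x j := by
    rw [hy]; unfold swapSeq; rw [if_neg (by omega), if_neg (by omega)]
  have hyi : y i = x (i+1) := by rw [hy]; unfold swapSeq; rw [if_pos rfl]
  have hyi1 : y (i+1) = x i := by
    rw [hy]; unfold swapSeq; rw [if_neg (by omega), if_pos rfl]
  have hyk : ∀ k, k ≠ i → k ≠ i+1 → y k = x k := by
    intro k h1 h2; rw [hy]; unfold swapSeq; rw [if_neg h1, if_neg h2]
  set Sx := (Finset.Ioc j n).filter (fun k => x k < x j) with hSx
  set Sy := (Finset.Ioc j n).filter (fun k => y k < y j) with hSy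
  have hiI : i ∈ Finset.Ioc j n := by rw [Finset.mem_Ioc]; omega
  have hi1I : i + 1 ∈ Finset.Ioc j n := by rw [Finset.mem_Ioc]; omega
  -- nonemptiness transfer, y → x
  have hback : Sy.Nonempty → Sx.Nonempty := by
    rintro ⟨k, hk⟩
    rw [hSy, Finset.mem_filter] at hk
    by_cases hk1 : k = i
    · rw [hk1, hyi, hyj] at hk
      exact ⟨i+1, by rw [hSx, Finset.mem_filter]; exact ⟨hi1I, hk.2⟩⟩
    · by_cases hk2 : k = i + 1
      · rw [hk2, hyi1, hyj] at hk
        exact ⟨i, by rw [hSx, Finset.mem_filter]; exact ⟨hiI, hk.2⟩⟩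
      · rw [hyk k hk1 hk2, hyj] at hk
        exact ⟨k, by rw [hSx, Finset.mem_filter]; exact ⟨hk.1, hk.2⟩⟩
  rw [revPD, revPD]
  show (if h : Sx.Nonempty then Sx.min' h - j else 0)
      = (if h : Sy.Nonempty then Sy.min' h - j else 0)
  by_cases hsx : Sx.Nonempty
  · set m1 := Sx.min' hsx with hm1def
    have hm1 : (j < m1 ∧ m1 ≤ n) ∧ x m1 < x j := by
      have h := Finset.min'_mem Sx hsx
      rw [Finset.mem_filter, Finset.mem_Ioc] at h
      exact h
    have hm1i : m1 ≠ i := by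
      intro h
      have hx1 : x i < x j := by rw [← h]; exact hm1.2
      obtain ⟨k', hk1, hk2, hk3⟩ := hK (Or.inl hx1)
      have : m1 ≤ k' :=
        Finset.min'_le _ _ (by rw [hSx, Finset.mem_filter, Finset.mem_Ioc]; exact ⟨⟨hk1, by omega⟩, hk3⟩)
      omega
    have hm1i1 : m1 ≠ i + 1 := by
      intro h
      have hx1 : x (i+1) < x j := by rw [← h]; exact hm1.2
      obtain ⟨k', hk1, hk2, hk3⟩ := hK (Or.inr hx1)
      have : m1 ≤ k' :=
        Finset.min'_le _ _ (by rw [hSx, Finset.mem_filter, Finset.mem_Ioc]; exact ⟨⟨hk1, by omega⟩, hk3⟩)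
      omega
    have hm1Sy : m1 ∈ Sy := by
      rw [hSy, Finset.mem_filter, Finset.mem_Ioc, hyj, hyk m1 hm1i hm1i1]
      exact hm1
    have hsy : Sy.Nonempty := ⟨m1, hm1Sy⟩
    have hlb : ∀ k ∈ Sy, m1 ≤ k := by
      intro k hk
      rw [hSy, Finset.mem_filter, hyj] at hk
      by_cases hk1 : k = i
      · subst hk1
        rw [hyi] at hk
        obtain ⟨k', hc1, hc2, hc3⟩ := hK (Or.inr hk.2)
        have : m1 ≤ k' :=
          Finset.min'_le _ _ (by rw [hSx, Finset.mem_filter, Finset.mem_Ioc]; exact ⟨⟨hc1, by omega⟩, hc3⟩)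
        omega
      · by_cases hk2 : k = i + 1
        · subst hk2
          rw [hyi1] at hk
          obtain ⟨k', hc1, hc2, hc3⟩ := hK (Or.inl hk.2)
          have : m1 ≤ k' :=
            Finset.min'_le _ _ (by rw [hSx, Finset.mem_filter, Finset.mem_Ioc]; exact ⟨⟨hc1, by omega⟩, hc3⟩)
          omega
        · rw [hyk k hk1 hk2] at hk
          exact Finset.min'_le _ _ (by rw [hSx, Finset.mem_filter]; exact ⟨hk.1, hk.2⟩)
    have hmin : Sy.min' hsy = m1 :=
      le_antisymm (Finset.min'_le _ _ hm1Sy) (Finset.le_min' _ _ _ hlb)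
    rw [dif_pos hsx, dif_pos hsy, hmin]
  · have hsy : ¬ Sy.Nonempty := fun h => hsx (hback h)
    rw [dif_neg hsx, dif_neg hsy]
end

section
/- Let x be a sequence of length n, let 1 ≤ i ≤ n−1 with x[i] < x[i+1], and let y = τ(x,i). Let r = PD⃖_x[i] if PD⃖_x[i] > 1, and r = n−i+1 otherwise. Then for every j in the forward red zone, i.e. with i+2 ≤ j ≤ i+r−1, either PD⃗_y[j] = PD⃗_x[j] or PD⃗_y[j] = PD⃗_x[j] − 1. -/
theorem stmt6 (n i r : ℕ) (x y : ℕ → ℤ) (hx : IsSeq n x)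
    (hi1 : 1 ≤ i) (hi2 : i + 1 ≤ n) (hlt : x i < x (i + 1))
    (hy : y = swapSeq x i)
    (hr : r = if 1 < revPD n x i then revPD n x i else n - i + 1) :
    ∀ j, i + 2 ≤ j → j ≤ i + r - 1 →
      fwdPD y j = fwdPD x j ∨ fwdPD y j = fwdPD x j - 1 := by
  intro j hj1 hj2
  subst hy
  have hji : j ≠ i := by omega
  have hji1 : j ≠ i + 1 := by omega
  have hyj : swapSeq x i j = x j := by simp [swapSeq, hji, hji1]
  set A := (Finset.Ico 1 j).filter (fun k => x k < x j) with hA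
  set B := (Finset.Ico 1 j).filter (fun k => swapSeq x i k < swapSeq x i j) with hB
  have hBmem : ∀ k, k ∈ B ↔ (k ∈ Finset.Ico 1 j ∧ swapSeq x i k < x j) := by
    intro k; rw [hB, Finset.mem_filter, hyj]
  have himem : i ∈ Finset.Ico 1 j := by simp [Finset.mem_Ico]; omega
  have hi1mem : i + 1 ∈ Finset.Ico 1 j := by simp [Finset.mem_Ico]; omega
  have hfy : fwdPD (swapSeq x i) j =
      if h : B.Nonempty then j - B.max' h else 0 := by
    rw [fwdPD]
  have hfx : fwdPD x j = if h : A.Nonempty then j - A.max' h else 0 := by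
    rw [fwdPD]
  by_cases hcase : x j ≤ x i ∨ x (i + 1) < x j
  · -- sets are equal
    left
    have hBA : B = A := by
      ext k
      rw [hBmem, hA, Finset.mem_filter]
      constructor <;> rintro ⟨hk, hk2⟩ <;> refine ⟨hk, ?_⟩ <;>
        · by_cases e1 : k = i
          · subst e1; simp [swapSeq] at hk2 ⊢ <;> omega
          · by_cases e2 : k = i + 1
            · subst e2; simp [swapSeq] at hk2 ⊢ <;> omega
            · simpa [swapSeq, e1, e2] using hk2
    rw [hfy, hfx, hBA]
  · -- shifted case : x i < x j ≤ x (i+1)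
    push_neg at hcase
    obtain ⟨h2, h1⟩ := hcase
    have hiA : i ∈ A := by rw [hA, Finset.mem_filter]; exact ⟨himem, h2⟩
    have hi1A : i + 1 ∉ A := by
      rw [hA, Finset.mem_filter]; push_neg; intro _; omega
    have hi1B : i + 1 ∈ B := by
      rw [hBmem]; refine ⟨hi1mem, ?_⟩; simp [swapSeq]; omega
    have hiB : i ∉ B := by
      rw [hBmem]; push_neg; intro _; simp [swapSeq]; omega
    have htrans : ∀ k, k ≠ i → k ≠ i + 1 → (k ∈ B ↔ k ∈ A) := by
      intro k e1 e2
      rw [hBmem, hA, Finset.mem_filter]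
      simp [swapSeq, e1, e2]
    have hAne : A.Nonempty := ⟨i, hiA⟩
    have hBne : B.Nonempty := ⟨i + 1, hi1B⟩
    set M := A.max' hAne with hM
    set N := B.max' hBne with hN
    have hMA : M ∈ A := A.max'_mem hAne
    have hNB : N ∈ B := B.max'_mem hBne
    have hMi : i ≤ M := A.le_max' i hiA
    have hNi : i + 1 ≤ N := B.le_max' (i + 1) hi1B
    have hMne : M ≠ i + 1 := fun e => hi1A (e ▸ hMA)
    have hNne : N ≠ i := fun e => hiB (e ▸ hNB)
    rcases eq_or_lt_of_le hMi with hMeq | hMgt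
    · -- M = i, then N = i + 1
      right
      have hNle : N = i + 1 := by
        by_contra hne
        have : N ∈ A := (htrans N hNne hne).mp hNB
        have := A.le_max' N this
        omega
      have hjM : j ≤ j := le_refl j
      rw [hfy, hfx, dif_pos hBne, dif_pos hAne, ← hM, ← hN, ← hMeq, hNle]
      omega
    · -- M ≥ i + 2
      left
      have hMge : i + 2 ≤ M := by omega
      have hMB : M ∈ B := (htrans M (by omega) (by omega)).mpr hMA
      have hNM : N ≤ M := by
        by_cases e : N = i + 1
        · omega
        · exact A.le_max' N ((htrans N hNne e).mp hNB)
      have hMN : M ≤ N := B.le_max' M hMB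
      rw [hfy, hfx, dif_pos hBne, dif_pos hAne, ← hM, ← hN]
      omega
end

section
/- Let x be a sequence of length n, let 1 ≤ i ≤ n−1 with x[i] < x[i+1], and let y = τ(x,i). Let ℓ = PD⃗_x[i] if PD⃗_x[i] > 0, and ℓ = i otherwise. Then for every j in the reverse red zone, i.e. with i−ℓ+1 ≤ j ≤ i−1, either PD⃖_y[j] = PD⃖_x[j] or PD⃖_y[j] = PD⃖_x[j] + 1. -/
theorem stmt7 (n i l : ℕ) (x y : ℕ → ℤ) (hx : IsSeq n x)
    (hi1 : 1 ≤ i) (hi2 : i + 1 ≤ n) (hlt : x i < x (i + 1))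
    (hy : y = swapSeq x i)
    (hl : l = if 0 < fwdPD x i then fwdPD x i else i) :
    ∀ j, i - l + 1 ≤ j → j ≤ i - 1 →
      revPD n y j = revPD n x j ∨ revPD n y j = revPD n x j + 1 := by
  subst hy
  intro j hj1 hj2
  have hji : j < i := by omega
  have hyj : swapSeq x i j = x j := by
    unfold swapSeq; rw [if_neg (by omega), if_neg (by omega)]
  have hyi : swapSeq x i i = x (i + 1) := by
    unfold swapSeq; rw [if_pos rfl]
  have hyi1 : swapSeq x i (i + 1) = x i := by
    unfold swapSeq; rw [if_neg (by omega), if_pos rfl]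
  have hyk : ∀ k, k ≠ i → k ≠ i + 1 → swapSeq x i k = x k := by
    intro k h1 h2; unfold swapSeq; rw [if_neg h1, if_neg h2]
  set A := (Finset.Ioc j n).filter (fun k => x k < x j) with hA
  set B := (Finset.Ioc j n).filter (fun k => swapSeq x i k < swapSeq x i j) with hB
  have hrx : revPD n x j =
      if h : A.Nonempty then A.min' h - j else 0 := by
    unfold revPD; rfl
  have hry : revPD n (swapSeq x i) j =
      if h : B.Nonempty then B.min' h - j else 0 := by
    unfold revPD; rfl
  by_cases hc : x i < x j ∧ x j ≤ x (i + 1)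
  · obtain ⟨hc1, hc2⟩ := hc
    have hiA : i ∈ A := by
      rw [hA, Finset.mem_filter, Finset.mem_Ioc]
      exact ⟨⟨hji, by omega⟩, hc1⟩
    have hAne : A.Nonempty := ⟨i, hiA⟩
    have hi1B : i + 1 ∈ B := by
      rw [hB, Finset.mem_filter, Finset.mem_Ioc, hyj, hyi1]
      exact ⟨⟨by omega, hi2⟩, hc1⟩
    have hBne : B.Nonempty := ⟨_, hi1B⟩
    have hmemB : ∀ k, k ∈ B ↔ (k = i + 1 ∨ (k ∈ A ∧ k ≠ i)) := by
      intro k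
      rw [hB, hA, Finset.mem_filter, Finset.mem_Ioc, Finset.mem_filter,
        Finset.mem_Ioc, hyj]
      by_cases hk : k = i
      · subst hk; rw [hyi]
        constructor
        · rintro ⟨_, hlt'⟩; exact absurd hlt' (not_lt.2 hc2)
        · rintro (h | ⟨_, h⟩)
          · omega
          · exact absurd rfl h
      · by_cases hk1 : k = i + 1
        · subst hk1; rw [hyi1]
          constructor
          · intro _; left; rfl
          · intro _; exact ⟨⟨by omega, hi2⟩, hc1⟩
        · rw [hyk k hk hk1]
          constructor
          · intro h; exact Or.inr ⟨h, hk⟩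
          · rintro (h | ⟨h, _⟩)
            · exact absurd h hk1
            · exact h
    have hmA : A.min' hAne ∈ A := Finset.min'_mem _ _
    have hmle : A.min' hAne ≤ i := Finset.min'_le _ _ hiA
    by_cases hmi : A.min' hAne = i
    · have hBm : B.min' hBne = i + 1 := by
        apply le_antisymm (Finset.min'_le _ _ hi1B)
        apply Finset.le_min'
        intro k hk
        rcases (hmemB k).1 hk with h | ⟨hkA, hki⟩
        · omega
        · have := Finset.min'_le _ _ hkA; omega
      right
      rw [hrx, hry, dif_pos hAne, dif_pos hBne, hBm, hmi]
      omega
    · have hmlt : A.min' hAne < i := lt_of_le_of_ne hmle hmi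
      have hmgt : j < A.min' hAne := by
        have := (Finset.mem_filter.1 hmA).1
        exact (Finset.mem_Ioc.1 this).1
      have hmB : A.min' hAne ∈ B := (hmemB _).2 (Or.inr ⟨hmA, hmi⟩)
      have hBm : B.min' hBne = A.min' hAne := by
        apply le_antisymm (Finset.min'_le _ _ hmB)
        apply Finset.le_min'
        intro k hk
        rcases (hmemB k).1 hk with h | ⟨hkA, _⟩
        · omega
        · exact Finset.min'_le _ _ hkA
      left
      rw [hrx, hry, dif_pos hAne, dif_pos hBne, hBm]
  · push_neg at hc
    have hBA : B = A := by
      ext k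
      rw [hB, hA, Finset.mem_filter, Finset.mem_filter, hyj]
      by_cases hk : k = i
      · subst hk; rw [hyi]
        constructor
        · rintro ⟨h1, h2⟩; exact ⟨h1, by linarith⟩
        · rintro ⟨h1, h2⟩; exact ⟨h1, hc h2⟩
      · by_cases hk1 : k = i + 1
        · subst hk1; rw [hyi1]
          constructor
          · rintro ⟨h1, h2⟩; exact ⟨h1, hc h2⟩
          · rintro ⟨h1, h2⟩; exact ⟨h1, by linarith⟩
        · rw [hyk k hk hk1]
    left
    rw [hrx, hry, hBA]
end

section
/- Let x be a sequence of length n, let 1 ≤ i ≤ n−1 with x[i] > x[i+1], and let y = τ(x,i). Let r = PD⃖_x[i+1] + 1 if PD⃖_x[i+1] > 0, and r = n−i+1 otherwise. Then for every j in the forward red zone, i.e. with i+2 ≤ j ≤ i+r−1, either PD⃗_y[j] = PD⃗_x[j] or PD⃗_y[j] = PD⃗_x[j] + 1. -/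
theorem stmt8 (n i r : ℕ) (x y : ℕ → ℤ) (hx : IsSeq n x)
    (hi1 : 1 ≤ i) (hi2 : i + 1 ≤ n) (hgt : x (i + 1) < x i)
    (hy : y = swapSeq x i)
    (hr : r = if 0 < revPD n x (i + 1) then revPD n x (i + 1) + 1 else n - i + 1) :
    ∀ j, i + 2 ≤ j → j ≤ i + r - 1 →
      fwdPD y j = fwdPD x j ∨ fwdPD y j = fwdPD x j + 1 := by
  subst hy
  intro j hj1 hj2
  have hij : i + 1 < j := by omega
  -- Step 1: j ≤ n and x (i+1) < x j
  have hmain : j ≤ n ∧ x (i + 1) < x j := by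
    by_cases hne : ((Finset.Ioc (i+1) n).filter (fun k => x k < x (i+1))).Nonempty
    · have hrev : revPD n x (i+1) =
        ((Finset.Ioc (i+1) n).filter (fun k => x k < x (i+1))).min' hne - (i+1) := by
        rw [revPD, dif_pos hne]
      set m := ((Finset.Ioc (i+1) n).filter (fun k => x k < x (i+1))).min' hne with hm
      have hmmem : m ∈ (Finset.Ioc (i+1) n).filter (fun k => x k < x (i+1)) :=
        Finset.min'_mem _ hne
      simp only [Finset.mem_filter, Finset.mem_Ioc] at hmmem
      have hpos : 0 < revPD n x (i+1) := by omega
      rw [hr, if_pos hpos, hrev] at hj2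
      have hjm : j < m := by omega
      have hjn : j ≤ n := by omega
      refine ⟨hjn, ?_⟩
      have hnej : x j ≠ x (i+1) := fun h =>
        (by omega : j ≠ i + 1) (hx (Set.mem_Icc.2 ⟨by omega, hjn⟩)
          (Set.mem_Icc.2 ⟨by omega, by omega⟩) h)
      rcases lt_or_gt_of_ne hnej with h | h
      · exfalso
        have : m ≤ j := Finset.min'_le _ j (by
          simp only [Finset.mem_filter, Finset.mem_Ioc]
          exact ⟨⟨hij, hjn⟩, h⟩)
        omega
      · exact h
    · have hrev : revPD n x (i+1) = 0 := by rw [revPD, dif_neg hne]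
      rw [hr, if_neg (by omega)] at hj2
      have hjn : j ≤ n := by omega
      refine ⟨hjn, ?_⟩
      have hnej : x j ≠ x (i+1) := fun h =>
        (by omega : j ≠ i + 1) (hx (Set.mem_Icc.2 ⟨by omega, hjn⟩)
          (Set.mem_Icc.2 ⟨by omega, by omega⟩) h)
      rcases lt_or_gt_of_ne hnej with h | h
      · exact absurd ⟨j, by
          simp only [Finset.mem_filter, Finset.mem_Ioc]
          exact ⟨⟨hij, hjn⟩, h⟩⟩ hne
      · exact h
  obtain ⟨hjn, hxij⟩ := hmain
  -- values of the swapped sequence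
  have hsw : ∀ k, k ≠ i → k ≠ i + 1 → swapSeq x i k = x k := by
    intro k h1 h2; simp [swapSeq, h1, h2]
  have hswi : swapSeq x i i = x (i+1) := by simp [swapSeq]
  have hswi1 : swapSeq x i (i+1) = x i := by
    simp [swapSeq]
  have hswj : swapSeq x i j = x j := hsw j (by omega) (by omega)
  set Sx := (Finset.Ico 1 j).filter (fun k => x k < x j) with hSxdef
  set Sy := (Finset.Ico 1 j).filter
      (fun k => swapSeq x i k < swapSeq x i j) with hSydef
  have hi1Sx : i + 1 ∈ Sx := by
    rw [hSxdef]; simp only [Finset.mem_filter, Finset.mem_Ico]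
    exact ⟨⟨by omega, hij⟩, hxij⟩
  have hiSy : i ∈ Sy := by
    rw [hSydef]; simp only [Finset.mem_filter, Finset.mem_Ico]
    refine ⟨⟨hi1, by omega⟩, ?_⟩
    rw [hswi, hswj]; exact hxij
  have hneSx : Sx.Nonempty := ⟨_, hi1Sx⟩
  have hneSy : Sy.Nonempty := ⟨_, hiSy⟩
  have hfx : fwdPD x j = j - Sx.max' hneSx := by
    rw [fwdPD, ← hSxdef, dif_pos hneSx]
  have hfy : fwdPD (swapSeq x i) j = j - Sy.max' hneSy := by
    rw [fwdPD, ← hSydef, dif_pos hneSy]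
  have hMxmem : Sx.max' hneSx ∈ Sx := Finset.max'_mem _ _
  have hMxge : i + 1 ≤ Sx.max' hneSx := Finset.le_max' _ _ hi1Sx
  have hMxmem' : (1 ≤ Sx.max' hneSx ∧ Sx.max' hneSx < j) ∧ x (Sx.max' hneSx) < x j := by
    have h : Sx.max' hneSx ∈ (Finset.Ico 1 j).filter (fun k => x k < x j) := hMxmem
    simpa only [Finset.mem_filter, Finset.mem_Ico] using h
  have hSySx : ∀ k ∈ Sy, i + 1 < k → k ∈ Sx := by
    intro k hk hlt
    rw [hSydef] at hk; rw [hSxdef]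
    simp only [Finset.mem_filter, Finset.mem_Ico] at hk ⊢
    rw [hsw k (by omega) (by omega), hswj] at hk
    exact hk
  rcases Nat.lt_or_ge (i+1) (Sx.max' hneSx) with hMx2 | hMx2
  · -- max of Sx is ≥ i+2 : the maxima coincide
    left
    rw [hfx, hfy]
    have hMxSy : Sx.max' hneSx ∈ Sy := by
      rw [hSydef]; simp only [Finset.mem_filter, Finset.mem_Ico]
      refine ⟨⟨by omega, hMxmem'.1.2⟩, ?_⟩
      rw [hsw _ (by omega) (by omega), hswj]
      exact hMxmem'.2
    have hle1 : Sx.max' hneSx ≤ Sy.max' hneSy := Finset.le_max' _ _ hMxSy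
    have hle2 : Sy.max' hneSy ≤ Sx.max' hneSx := by
      apply Finset.max'_le
      intro k hk
      rcases Nat.lt_or_ge (i+1) k with h | h
      · exact Finset.le_max' _ _ (hSySx k hk h)
      · omega
    omega
  · -- max of Sx is exactly i+1
    have hMxeq : Sx.max' hneSx = i + 1 := by omega
    have hSxle : ∀ k ∈ Sx, k ≤ i + 1 := fun k hk => by
      have := Finset.le_max' Sx k hk; omega
    have hSyle : ∀ k ∈ Sy, k ≤ i + 1 := by
      intro k hk
      by_contra h
      push_neg at h
      have := hSxle k (hSySx k hk (by omega))
      omega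
    have hxixj : x i ≠ x j := fun h =>
      (by omega : i ≠ j) (hx (Set.mem_Icc.2 ⟨by omega, by omega⟩)
        (Set.mem_Icc.2 ⟨by omega, hjn⟩) h)
    rcases lt_or_gt_of_ne hxixj with hcase | hcase
    · -- x i < x j : i+1 ∈ Sy, maxima equal
      left
      rw [hfx, hfy]
      have hi1Sy : i + 1 ∈ Sy := by
        rw [hSydef]; simp only [Finset.mem_filter, Finset.mem_Ico]
        refine ⟨⟨by omega, hij⟩, ?_⟩
        rw [hswi1, hswj]; exact hcase
      have hle1 : i + 1 ≤ Sy.max' hneSy := Finset.le_max' _ _ hi1Sy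
      have hle2 : Sy.max' hneSy ≤ i + 1 := hSyle _ (Finset.max'_mem _ _)
      omega
    · -- x j < x i : i+1 ∉ Sy, max of Sy is i
      right
      rw [hfx, hfy]
      have hi1nSy : i + 1 ∉ Sy := by
        rw [hSydef]; simp only [Finset.mem_filter, Finset.mem_Ico]
        rw [hswi1, hswj]
        intro h
        exact absurd h.2 (not_lt.2 (le_of_lt hcase))
      have hMySy : Sy.max' hneSy ∈ Sy := Finset.max'_mem _ _
      have hle1 : i ≤ Sy.max' hneSy := Finset.le_max' _ _ hiSy
      have hle2 : Sy.max' hneSy ≤ i := by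
        have h1 := hSyle _ hMySy
        rcases Nat.lt_or_ge (Sy.max' hneSy) (i+1) with h | h
        · omega
        · exfalso
          have : Sy.max' hneSy = i + 1 := by omega
          rw [this] at hMySy
          exact hi1nSy hMySy
      omega
end

section
/- Let x be a sequence of length n, let 1 ≤ i ≤ n−1 with x[i] > x[i+1], and let y = τ(x,i). Let ℓ = PD⃗_x[i+1] − 1 if PD⃗_x[i+1] > 1, and ℓ = i otherwise. Then for every j in the reverse red zone, i.e. with i−ℓ+1 ≤ j ≤ i−1, either PD⃖_y[j] = PD⃖_x[j] or PD⃖_y[j] = PD⃖_x[j] − 1. -/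
theorem stmt9 (n i l : ℕ) (x y : ℕ → ℤ) (hx : IsSeq n x)
    (hi1 : 1 ≤ i) (hi2 : i + 1 ≤ n) (hgt : x (i + 1) < x i)
    (hy : y = swapSeq x i)
    (hl : l = if 1 < fwdPD x (i + 1) then fwdPD x (i + 1) - 1 else i) :
    ∀ j, i - l + 1 ≤ j → j ≤ i - 1 →
      revPD n y j = revPD n x j ∨ revPD n y j = revPD n x j - 1 := by
  subst hy
  intro j hj1 hj2
  have hji : j < i := by omega
  have hne : j ≠ i := by omega
  have hne2 : j ≠ i + 1 := by omega
  have e1 : swapSeq x i i = x (i + 1) := by simp [swapSeq]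
  have e2 : swapSeq x i (i + 1) = x i := by simp [swapSeq]
  have e3 : ∀ k, k ≠ i → k ≠ i + 1 → swapSeq x i k = x k := by
    intro k h h'; simp [swapSeq, h, h']
  have hSyj : swapSeq x i j = x j := e3 j hne hne2
  by_cases h1 : x i < x j
  · left
    have heq : ((Finset.Ioc j n).filter (fun k => swapSeq x i k < swapSeq x i j)) =
        ((Finset.Ioc j n).filter (fun k => x k < x j)) := by
      apply Finset.filter_congr
      intro k hk
      simp only [hSyj]
      rcases eq_or_ne k i with rfl | h
      · rw [e1]
        constructor <;> intro _ <;> linarith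
      rcases eq_or_ne k (i+1) with rfl | h'
      · rw [e2]
        constructor <;> intro _ <;> linarith
      · rw [e3 k h h']
    unfold revPD
    rw [heq]
  · by_cases h2 : x (i + 1) < x j
    · -- tricky case: x (i+1) < x j ≤ x i
      set Sx := (Finset.Ioc j n).filter (fun k => x k < x j) with hSx
      set Sy := (Finset.Ioc j n).filter (fun k => swapSeq x i k < swapSeq x i j) with hSy
      have hmem : ∀ k, k ∈ Sy ↔ (k ∈ Sx ∧ k ≠ i + 1) ∨ k = i := by
        intro k
        simp only [hSy, hSx, Finset.mem_filter, Finset.mem_Ioc, hSyj]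
        constructor
        · rintro ⟨hk, hk2⟩
          rcases eq_or_ne k i with rfl | hki
          · right; rfl
          rcases eq_or_ne k (i+1) with rfl | hki2
          · exfalso; rw [e2] at hk2; exact h1 hk2
          · left
            rw [e3 k hki hki2] at hk2
            exact ⟨⟨hk, hk2⟩, hki2⟩
        · rintro (⟨⟨hk, hk2⟩, hki2⟩ | rfl)
          · rcases eq_or_ne k i with rfl | hki
            · exact ⟨hk, by rw [e1]; exact h2⟩
            · exact ⟨hk, by rw [e3 k hki hki2]; exact hk2⟩
          · exact ⟨⟨hji, by omega⟩, by rw [e1]; exact h2⟩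
      have hSxne : Sx.Nonempty := by
        refine ⟨i + 1, ?_⟩
        simp only [hSx, Finset.mem_filter, Finset.mem_Ioc]
        exact ⟨⟨by omega, hi2⟩, h2⟩
      have hSyne : Sy.Nonempty := ⟨i, (hmem i).2 (Or.inr rfl)⟩
      have hmx := Sx.min'_mem hSxne
      have hmy := Sy.min'_mem hSyne
      have hiSx : i ∉ Sx := by
        simp only [hSx, Finset.mem_filter]
        intro h; exact h1 h.2
      have hmxle : Sx.min' hSxne ≤ i + 1 := Finset.min'_le _ _ (by
        simp only [hSx, Finset.mem_filter, Finset.mem_Ioc]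
        exact ⟨⟨by omega, hi2⟩, h2⟩)
      have hmyle : Sy.min' hSyne ≤ i := Finset.min'_le _ _ ((hmem i).2 (Or.inr rfl))
      have hkey : Sy.min' hSyne = Sx.min' hSxne ∨
          (Sx.min' hSxne = i + 1 ∧ Sy.min' hSyne = i) := by
        by_cases hc : Sx.min' hSxne < i
        · left
          have hmxSy : Sx.min' hSxne ∈ Sy :=
            (hmem _).2 (Or.inl ⟨hmx, by omega⟩)
          have h3 : Sy.min' hSyne ≤ Sx.min' hSxne := Finset.min'_le _ _ hmxSy
          rcases (hmem _).1 hmy with ⟨hmySx, _⟩ | heqi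
          · have := Finset.min'_le _ _ hmySx
            omega
          · omega
        · right
          have hmxne : Sx.min' hSxne ≠ i := fun h => hiSx (h ▸ hmx)
          have hmxeq : Sx.min' hSxne = i + 1 := by omega
          refine ⟨hmxeq, ?_⟩
          rcases (hmem _).1 hmy with ⟨hmySx, hne3⟩ | heqi
          · have := Finset.min'_le _ _ hmySx
            omega
          · exact heqi
      unfold revPD
      rw [dif_pos hSyne, dif_pos hSxne]
      rcases hkey with h | ⟨ha, hb⟩
      · left; rw [h]
      · right; rw [ha, hb]; omega
    · left
      have heq : ((Finset.Ioc j n).filter (fun k => swapSeq x i k < swapSeq x i j)) =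
          ((Finset.Ioc j n).filter (fun k => x k < x j)) := by
        apply Finset.filter_congr
        intro k hk
        simp only [hSyj]
        rcases eq_or_ne k i with rfl | h
        · rw [e1]
          constructor <;> intro h <;> [exact absurd h h2; exact absurd h h1]
        rcases eq_or_ne k (i+1) with rfl | h'
        · rw [e2]
          constructor <;> intro h <;> [exact absurd h h1; exact absurd h h2]
        · rw [e3 k h h']
      unfold revPD
      rw [heq]
end

section
/- Let x be a sequence of length n and let i, j ∈ {1,…,n−1} with i ≠ j. Then τ(x,i) and τ(x,j) do not have the same Cartesian tree, i.e. PD⃗_{τ(x,i)} ≠ PD⃗_{τ(x,j)}. -/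
/-- The parent-distance table of a sequence of length `n`, as a function on `Fin n`
(position `k : Fin n` corresponds to index `k+1 ∈ {1,…,n}`). -/
def PDvec (n : ℕ) (x : ℕ → ℤ) : Fin n → ℕ := fun k => fwdPD x (k.1 + 1)

/-- `NGat n x i` is the set of parent-distance tables obtained by a swap at position `i`
(`1 ≤ i ≤ n-1`) from some sequence `z` having the same Cartesian tree (i.e. the same
parent-distance table) as `x`; it is empty for `i` out of range. -/
def NGat (n : ℕ) (x : ℕ → ℤ) (i : ℕ) : Set (Fin n → ℕ) :=
  {P | 1 ≤ i ∧ i + 1 ≤ n ∧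
    ∃ z, IsSeq n z ∧ PDvec n z = PDvec n x ∧ P = PDvec n (swapSeq z i)}

/-- The neighborhood of (the Cartesian tree of) `x` in the swap graph. -/
def NG (n : ℕ) (x : ℕ → ℤ) : Set (Fin n → ℕ) := ⋃ i, NGat n x i

lemma pd_one_iff (y : ℕ → ℤ) (k : ℕ) (hk : 1 ≤ k) :
    fwdPD y (k+1) = 1 ↔ y k < y (k+1) := by
  unfold fwdPD
  constructor
  · intro h
    by_cases hne : ((Finset.Ico 1 (k+1)).filter (fun j => y j < y (k+1))).Nonempty
    · rw [dif_pos hne] at h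
      have hmem := Finset.max'_mem _ hne
      have hlt : ((Finset.Ico 1 (k+1)).filter (fun j => y j < y (k+1))).max' hne < k+1 :=
        (Finset.mem_Ico.1 (Finset.mem_filter.1 hmem).1).2
      have hmax : ((Finset.Ico 1 (k+1)).filter (fun j => y j < y (k+1))).max' hne = k := by omega
      have := (Finset.mem_filter.1 hmem).2
      rwa [hmax] at this
    · rw [dif_neg hne] at h; simp at h
  · intro h
    have hkmem : k ∈ (Finset.Ico 1 (k+1)).filter (fun j => y j < y (k+1)) := by
      simp only [Finset.mem_filter, Finset.mem_Ico]
      exact ⟨⟨hk, by omega⟩, h⟩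
    have hne : ((Finset.Ico 1 (k+1)).filter (fun j => y j < y (k+1))).Nonempty := ⟨k, hkmem⟩
    rw [dif_pos hne]
    have h1 : ((Finset.Ico 1 (k+1)).filter (fun j => y j < y (k+1))).max' hne < k+1 := by
      have := (Finset.mem_filter.1 (Finset.max'_mem _ hne)).1
      exact (Finset.mem_Ico.1 this).2
    have h2 : k ≤ ((Finset.Ico 1 (k+1)).filter (fun j => y j < y (k+1))).max' hne :=
      Finset.le_max' _ k hkmem
    omega

theorem stmt10 (n i j : ℕ) (x : ℕ → ℤ) (hx : IsSeq n x)
    (hi1 : 1 ≤ i) (hi2 : i + 1 ≤ n) (hj1 : 1 ≤ j) (hj2 : j + 1 ≤ n)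
    (hij : i ≠ j) :
    PDvec n (swapSeq x i) ≠ PDvec n (swapSeq x j) := by
  wlog hlt : i < j generalizing i j with H
  · intro h
    exact H j i hj1 hj2 hi1 hi2 hij.symm (by omega) h.symm
  intro heq
  have key : ∀ m, 1 ≤ m → m ≤ n → fwdPD (swapSeq x i) m = fwdPD (swapSeq x j) m := by
    intro m h1 h2
    have := congrFun heq ⟨m-1, by omega⟩
    simpa [PDvec, Nat.sub_add_cancel h1] using this
  have hmem : ∀ m, 1 ≤ m → m ≤ n → m ∈ Set.Icc 1 n := by
    intro m h1 h2; exact Set.mem_Icc.2 ⟨h1, h2⟩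
  have hne1 : x i ≠ x (i+1) := fun h => by
    have := hx (hmem i hi1 (by omega)) (hmem (i+1) (by omega) hi2) h; omega
  rcases eq_or_lt_of_le (show i + 1 ≤ j by omega) with hj | hj
  · -- j = i + 1
    subst hj
    have hne2 : x i ≠ x (i+2) := fun h => by
      have := hx (hmem i hi1 (by omega)) (hmem (i+2) (by omega) (by omega)) h; omega
    have hne3 : x (i+1) ≠ x (i+2) := fun h => by
      have := hx (hmem (i+1) (by omega) (by omega)) (hmem (i+2) (by omega) (by omega)) h; omega
    have e1 : fwdPD (swapSeq x i) (i+1) = 1 ↔ x (i+1) < x i := by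
      rw [pd_one_iff _ _ hi1]
      simp [swapSeq]
    have e2 : fwdPD (swapSeq x (i+1)) (i+1) = 1 ↔ x i < x (i+2) := by
      rw [pd_one_iff _ _ hi1]
      simp only [swapSeq, if_neg (by omega : i ≠ i+1), if_neg (by omega : i ≠ i+1+1),
        if_pos rfl]
      simp
    have e3 : fwdPD (swapSeq x i) (i+2) = 1 ↔ x i < x (i+2) := by
      rw [show i+2 = (i+1)+1 from rfl, pd_one_iff _ _ (by omega)]
      simp only [swapSeq, if_neg (by omega : i+1+1 ≠ i), if_neg (by omega : i+1+1 ≠ i+1),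
        if_neg (by omega : i+1 ≠ i), if_pos rfl]
      simp
    have e4 : fwdPD (swapSeq x (i+1)) (i+2) = 1 ↔ x (i+2) < x (i+1) := by
      rw [show i+2 = (i+1)+1 from rfl, pd_one_iff _ _ (by omega)]
      simp only [swapSeq, if_neg (by omega : i+1+1 ≠ i+1), if_pos rfl]
      simp
    have k1 := key (i+1) (by omega) (by omega)
    have k2 := key (i+2) (by omega) (by omega)
    rw [k1] at e1
    rw [k2] at e3
    have h12 : x (i+1) < x i ↔ x i < x (i+2) := e1.symm.trans e2
    have h23 : x i < x (i+2) ↔ x (i+2) < x (i+1) := e3.symm.trans e4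
    omega
  · -- i + 1 < j
    have e1 : fwdPD (swapSeq x i) (i+1) = 1 ↔ x (i+1) < x i := by
      rw [pd_one_iff _ _ hi1]
      simp [swapSeq]
    have e2 : fwdPD (swapSeq x j) (i+1) = 1 ↔ x i < x (i+1) := by
      rw [pd_one_iff _ _ hi1]
      simp only [swapSeq, if_neg (by omega : i ≠ j), if_neg (by omega : i ≠ j+1),
        if_neg (by omega : i+1 ≠ j), if_neg (by omega : i+1 ≠ j+1)]
    have k1 := key (i+1) (by omega) (by omega)
    rw [k1] at e1
    have h12 : x (i+1) < x i ↔ x i < x (i+1) := e1.symm.trans e2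
    omega
end

section
/- Let x be a sequence of length n and let k be the position of the minimum value of x (so that the root of the Cartesian tree of x is k, its left subtree is the Cartesian tree of A = x[1…k−1] and its right subtree is the Cartesian tree of B = x[k+1…n]). Then |NG(x)| = |NG(A)| + |NG(B)| + |NG(x,k−1)| + |NG(x,k)|, where NG(x,i) = ∅ for i ∉ {1,…,n−1} and NG of a sequence of length at most 1 is ∅. Equivalently, |Σ_{i=1}^{k−2} |NG(x,i)|| = |NG(A)| and Σ_{i=k+1}^{n−1} |NG(x,i)| = |NG(B)|. -/
/-!
If the minimum of `x` is at `k`, the table of `x` is obtained by gluing the tables of the two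
sides `x[1…k-1]` and `x[k+1…n]` around a root at `k`, and the glued table determines both side
tables. The position of the minimum is itself determined by the table, and any two sides can be
realised around a new minimum after shifting their values. Hence a swap at `i ≤ k - 2` fixes
the root and the right side and acts on the left side alone, so `NG(x,i)` is an injective image
of `NG(A,i)`; symmetrically `NG(x,i+k)` is one of `NG(B,i)`.

The sets `NG(x,i)` are pairwise disjoint: the swap at `i` changes the table at `i + 1` while a
swap at `j ≥ i + 2` does not, and for `j = i + 1` the tables at `i + 1` and `i + 2` give a
contradiction. So `|NG(x)| = Σᵢ |NG(x,i)|`, which splits around `k - 1` and `k`.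
-/

section ParentDistance

variable {w w' : ℕ → ℤ} {m : ℕ}

lemma fwdPD_congr_s12 (h : ∀ j, 1 ≤ j → j < m → (w j < w m ↔ w' j < w' m)) :
    fwdPD w m = fwdPD w' m := by
  unfold fwdPD
  rw [Finset.filter_congr fun j hj => h j (Finset.mem_Ico.1 hj).1 (Finset.mem_Ico.1 hj).2]

lemma fwdPD_congr_add (c : ℤ) (h : ∀ j, 1 ≤ j → j ≤ m → w j = w' j + c) :
    fwdPD w m = fwdPD w' m :=
  fwdPD_congr_s12 fun j hj hjm => by
    rw [h j hj hjm.le, h m (hj.trans hjm.le) le_rfl, add_lt_add_iff_right]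

lemma fwdPD_eq_zero_iff : fwdPD w m = 0 ↔ ∀ j, 1 ≤ j → j < m → ¬ w j < w m := by
  unfold fwdPD
  split_ifs with hne
  · obtain ⟨⟨hj1, hjm⟩, hj⟩ : (1 ≤ _ ∧ _ < m) ∧ w _ < w m := by
      simpa only [Finset.mem_filter, Finset.mem_Ico] using Finset.max'_mem _ hne
    exact iff_of_false (by omega) fun h => h _ hj1 hjm hj
  · simpa [Finset.filter_eq_empty_iff, and_imp] using hne

lemma fwdPD_lt (hm : 1 ≤ m) : fwdPD w m < m := by
  unfold fwdPD
  split_ifs with hne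
  · have := (Finset.mem_Ico.1 (Finset.mem_filter.1 (Finset.max'_mem _ hne)).1).1
    omega
  · omega

lemma fwdPD_eq_iff {d : ℕ} (hd : 0 < d) (hdm : d < m) :
    fwdPD w m = d ↔ w (m - d) < w m ∧ ∀ j, m - d < j → j < m → ¬ w j < w m := by
  unfold fwdPD
  split_ifs with hne
  · have hmax := Finset.max'_mem _ hne
    simp only [Finset.mem_filter, Finset.mem_Ico] at hmax
    rw [show m - Finset.max' _ hne = d ↔ Finset.max' _ hne = m - d by omega,
      Finset.max'_eq_iff]
    simp only [Finset.mem_filter, Finset.mem_Ico]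
    constructor
    · rintro ⟨⟨-, hlt⟩, hmax⟩
      exact ⟨hlt, fun j hj hjm hj' => by have := hmax j ⟨⟨by omega, hjm⟩, hj'⟩; omega⟩
    · rintro ⟨hlt, hgap⟩
      refine ⟨⟨⟨by omega, by omega⟩, hlt⟩, fun j ⟨⟨_, hjm⟩, hj⟩ => ?_⟩
      by_contra hc
      exact hgap j (by omega) hjm hj
  · refine iff_of_false (by omega) fun ⟨hlt, _⟩ => hne ⟨m - d, ?_⟩
    simp only [Finset.mem_filter, Finset.mem_Ico]
    exact ⟨⟨by omega, by omega⟩, hlt⟩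

lemma fwdPD_add_one_eq_one_iff (hm : 1 ≤ m) : fwdPD w (m + 1) = 1 ↔ w m < w (m + 1) := by
  rw [fwdPD_eq_iff one_pos (by omega), Nat.add_sub_cancel]
  exact and_iff_left fun j h1 h2 => absurd h2 (by omega)

lemma fwdPD_add_two_eq_two_iff (hm : 1 ≤ m) :
    fwdPD w (m + 2) = 2 ↔ w m < w (m + 2) ∧ ¬ w (m + 1) < w (m + 2) := by
  rw [fwdPD_eq_iff two_pos (by omega), Nat.add_sub_cancel]
  refine and_congr_right fun _ => ⟨fun h => h _ (by omega) (by omega), fun h j h1 h2 => ?_⟩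
  rwa [show j = m + 1 by omega]

lemma fwdPD_eq_one_two_iff (hm : 1 ≤ m) :
    (fwdPD w (m + 1) = 1 ↔ w m < w (m + 1)) ∧ (fwdPD w (m + 2) = 1 ↔ w (m + 1) < w (m + 2)) ∧
      (fwdPD w (m + 2) = 2 ↔ w m < w (m + 2) ∧ ¬ w (m + 1) < w (m + 2)) :=
  ⟨fwdPD_add_one_eq_one_iff hm, fwdPD_add_one_eq_one_iff (m := m + 1) (by omega),
    fwdPD_add_two_eq_two_iff hm⟩

lemma fwdPD_eq_of_lt {k p : ℕ} (hk : 1 ≤ k) (hkp : k < p) (hlt : w k < w p) :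
    fwdPD w p = if fwdPD (fun j => w (j + k)) (p - k) = 0 then p - k
      else fwdPD (fun j => w (j + k)) (p - k) := by
  have hp : w (p - k + k) = w p := by rw [Nat.sub_add_cancel hkp.le]
  split_ifs with h0
  · rw [fwdPD_eq_iff (by omega) (by omega), Nat.sub_sub_self hkp.le]
    refine ⟨hlt, fun j hj hjp => ?_⟩
    have := fwdPD_eq_zero_iff.1 h0 (j - k) (by omega) (by omega)
    rwa [Nat.sub_add_cancel hj.le, hp] at this
  · have hd := fwdPD_lt (w := fun j => w (j + k)) (show 1 ≤ p - k by omega)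
    obtain ⟨hdlt, hgap⟩ := (fwdPD_eq_iff (Nat.pos_of_ne_zero h0) hd).1 rfl
    rw [fwdPD_eq_iff (Nat.pos_of_ne_zero h0) (by omega)]
    set d := fwdPD (fun j => w (j + k)) (p - k)
    simp only [hp] at hdlt hgap
    refine ⟨by rwa [show p - k - d + k = p - d by omega] at hdlt, fun j hj hjp => ?_⟩
    have := hgap (j - k) (by omega) (by omega)
    rwa [Nat.sub_add_cancel (by omega)] at this

end ParentDistance

section Tables

variable {n m : ℕ} {w z x : ℕ → ℤ}

lemma PDvec_eq_PDvec_iff :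
    PDvec n z = PDvec n x ↔ ∀ p, 1 ≤ p → p ≤ n → fwdPD z p = fwdPD x p := by
  refine ⟨fun h p hp hpn => ?_, fun h => funext fun t => h (t + 1) (by omega) (by omega)⟩
  simpa only [PDvec, Nat.sub_add_cancel hp] using congrFun h ⟨p - 1, by omega⟩

lemma PDvec_congr_add (c : ℤ) (h : ∀ j, 1 ≤ j → j ≤ m → z j = w j + c) :
    PDvec m z = PDvec m w :=
  funext fun t => fwdPD_congr_add c fun j hj hjt => h j hj (by omega)

lemma PDvec_congr (h : ∀ j, 1 ≤ j → j ≤ m → z j = w j) : PDvec m z = PDvec m w :=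
  PDvec_congr_add 0 fun j hj hjm => by rw [h j hj hjm, add_zero]

def boundedTables (m : ℕ) : Set (Fin m → ℕ) := {P | ∀ t, P t ≤ t}

lemma PDvec_mem_boundedTables : PDvec m w ∈ boundedTables m := fun t => by
  have := fwdPD_lt (w := w) (m := t + 1) (by omega)
  simp only [PDvec]
  omega

lemma boundedTables_finite (m : ℕ) : (boundedTables m).Finite :=
  (Set.Finite.pi fun t : Fin m => Set.finite_Iic (t : ℕ)).subset fun _ hP t _ => hP t

end Tables

section Swap

variable {n i : ℕ} {w : ℕ → ℤ}

lemma swapSeq_eq_comp : swapSeq w i = w ∘ Equiv.swap i (i + 1) := by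
  funext j
  simp only [swapSeq, Function.comp_apply, Equiv.swap_apply_def]
  split_ifs <;> rfl

lemma swapSeq_apply_left : swapSeq w i i = w (i + 1) := if_pos rfl

lemma swapSeq_apply_right : swapSeq w i (i + 1) = w i := by
  simp [swapSeq]

lemma swapSeq_apply_of_ne {j : ℕ} (hj : j ≠ i) (hj' : j ≠ i + 1) : swapSeq w i j = w j := by
  simp only [swapSeq, if_neg hj, if_neg hj']

lemma swapSeq_shift (k : ℕ) :
    (fun j => swapSeq w (i + k) (j + k)) = swapSeq (fun j => w (j + k)) i := by
  funext j
  simp only [swapSeq, add_left_inj, show i + k + 1 = i + 1 + k by omega]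

lemma mapsTo_swap_Icc {a b : ℕ} (ha : a ≤ i) (hb : i + 1 ≤ b) :
    Set.MapsTo (Equiv.swap i (i + 1)) (Set.Icc a b) (Set.Icc a b) := fun j hj => by
  simp only [Set.mem_Icc, Equiv.swap_apply_def] at hj ⊢
  split_ifs <;> omega

lemma IsSeq.ne (hw : IsSeq n w) {p q : ℕ} (hp : p ∈ Set.Icc 1 n) (hq : q ∈ Set.Icc 1 n)
    (hpq : p ≠ q) : w p ≠ w q :=
  fun h => hpq (hw hp hq h)

lemma IsSeq.mono {m : ℕ} (hw : IsSeq n w) (hmn : m ≤ n) : IsSeq m w :=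
  Set.InjOn.mono (Set.Icc_subset_Icc_right hmn) hw

lemma IsSeq.shift (hw : IsSeq n w) (k : ℕ) : IsSeq (n - k) (fun j => w (j + k)) :=
  fun a ha b hb h => by
    simp only [Set.mem_Icc] at ha hb
    have := hw (Set.mem_Icc.2 ⟨by omega, by omega⟩) (Set.mem_Icc.2 ⟨by omega, by omega⟩) h
    omega

lemma swapSeq_congr_add {m : ℕ} {z : ℕ → ℤ} {c : ℤ} (hi : 1 ≤ i) (him : i + 1 ≤ m)
    (h : ∀ j, 1 ≤ j → j ≤ m → z j = w j + c) :
    ∀ j, 1 ≤ j → j ≤ m → swapSeq z i j = swapSeq w i j + c := fun j hj hjm => by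
  have := mapsTo_swap_Icc hi him (Set.mem_Icc.2 ⟨hj, hjm⟩)
  simp only [swapSeq_eq_comp, Function.comp_apply]
  exact h _ this.1 this.2

end Swap

def MinAt (n : ℕ) (w : ℕ → ℤ) (k : ℕ) : Prop := ∀ j, 1 ≤ j → j ≤ n → j ≠ k → w k < w j

namespace MinAt

variable {n k : ℕ} {w z x : ℕ → ℤ}

lemma fwdPD_eq_zero (h : MinAt n w k) (hkn : k ≤ n) : fwdPD w k = 0 :=
  fwdPD_eq_zero_iff.2 fun j hj hjk hlt => (h j hj (by omega) (by omega)).not_gt hlt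

lemma swapSeq (h : MinAt n w k) {i : ℕ} (hi : 1 ≤ i) (hin : i + 1 ≤ n) (hik : i ≠ k)
    (hik' : i + 1 ≠ k) : MinAt n (_root_.swapSeq w i) k := fun j hj hjn hjk => by
  have hj' := mapsTo_swap_Icc hi hin (Set.mem_Icc.2 ⟨hj, hjn⟩)
  rw [Set.mem_Icc] at hj'
  rw [swapSeq_eq_comp, Function.comp_apply, Function.comp_apply,
    Equiv.swap_apply_of_ne_of_ne hik.symm hik'.symm]
  exact h _ hj'.1 hj'.2 (by rw [Equiv.swap_apply_def]; split_ifs <;> omega)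

/-- The minimum sits at the last position whose parent distance is `0`, so it is determined
by the table. -/
lemma of_PDvec_eq (hx : MinAt n x k) (hk : 1 ≤ k) (hkn : k ≤ n) (hz : IsSeq n z)
    (h : PDvec n z = PDvec n x) : MinAt n z k := by
  rw [PDvec_eq_PDvec_iff] at h
  obtain ⟨m, hm, hmin⟩ := Finset.exists_min_image (Finset.Icc 1 n) z
    ⟨k, Finset.mem_Icc.2 ⟨hk, hkn⟩⟩
  rw [Finset.mem_Icc] at hm
  have hne : ∀ j, 1 ≤ j → j ≤ n → j ≠ m → z m < z j := fun j hj hjn hjm =>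
    (hmin j (Finset.mem_Icc.2 ⟨hj, hjn⟩)).lt_of_ne
      fun he => hjm (hz (Set.mem_Icc.2 hm) (Set.mem_Icc.2 ⟨hj, hjn⟩) he).symm
  obtain rfl : m = k := by
    rcases lt_trichotomy m k with hlt | rfl | hgt
    · have := (h k hk hkn).trans (hx.fwdPD_eq_zero hkn)
      exact absurd (hne k hk hkn (by omega)) (fwdPD_eq_zero_iff.1 this m hm.1 hlt)
    · rfl
    · have := (h m hm.1 hm.2).symm.trans (MinAt.fwdPD_eq_zero hne hm.2)
      exact absurd (hx m hm.1 hm.2 (by omega)) (fwdPD_eq_zero_iff.1 this k hk hgt)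
  exact hne

end MinAt

/-- The table of a sequence whose minimum is at `k`, built from the tables `P` and `Q` of its
two sides: position `k` is the root, and an entry `0` of `Q` (no smaller value in the right
part) becomes the distance to the root. -/
def gluePD (n k : ℕ) (P : Fin (k - 1) → ℕ) (Q : Fin (n - k) → ℕ) : Fin n → ℕ := fun m =>
  if h : m.1 < k - 1 then P ⟨m, h⟩
  else if h' : k ≤ m.1 then
    (if Q ⟨m - k, by omega⟩ = 0 then m + 1 - k else Q ⟨m - k, by omega⟩)
  else 0

section Glue

variable {n k : ℕ} {w z x : ℕ → ℤ}

lemma gluePD_inj {P P' : Fin (k - 1) → ℕ} {Q Q' : Fin (n - k) → ℕ} (hkn : k ≤ n)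
    (hQ : Q ∈ boundedTables (n - k)) (hQ' : Q' ∈ boundedTables (n - k)) :
    gluePD n k P Q = gluePD n k P' Q' ↔ P = P' ∧ Q = Q' := by
  refine ⟨fun h => ⟨funext fun t => ?_, funext fun t => ?_⟩, fun ⟨rfl, rfl⟩ => rfl⟩
  · simpa [gluePD] using congrFun h ⟨t, by omega⟩
  · have e := congrFun h ⟨t + k, by omega⟩
    simp only [gluePD, show ¬ t + k < k - 1 by omega, le_add_self, Nat.add_sub_cancel,
      show (t : ℕ) + k + 1 - k = t + 1 by omega, Fin.eta, dite_false, dite_true] at e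
    have := hQ t
    have := hQ' t
    split_ifs at e <;> omega

lemma PDvec_eq_gluePD (h : MinAt n w k) (hk : 1 ≤ k) :
    PDvec n w = gluePD n k (PDvec (k - 1) w) (PDvec (n - k) (fun j => w (j + k))) := by
  funext m
  simp only [PDvec, gluePD]
  by_cases hm : (m : ℕ) < k - 1
  · rw [dif_pos hm]
  by_cases hkm : k ≤ (m : ℕ)
  · rw [dif_neg hm, dif_pos hkm,
      fwdPD_eq_of_lt hk (by omega) (h _ (by omega) (by omega) (by omega)),
      show (m : ℕ) + 1 - k = m - k + 1 by omega]
    rfl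
  · rw [dif_neg hm, dif_neg hkm, show (m : ℕ) + 1 = k by omega, h.fwdPD_eq_zero (by omega)]

lemma PDvec_eq_iff_of_minAt (hz : MinAt n z k) (hx : MinAt n x k) (hk : 1 ≤ k) (hkn : k ≤ n) :
    PDvec n z = PDvec n x ↔ PDvec (k - 1) z = PDvec (k - 1) x ∧
      PDvec (n - k) (fun j => z (j + k)) = PDvec (n - k) (fun j => x (j + k)) := by
  rw [PDvec_eq_gluePD hz hk, PDvec_eq_gluePD hx hk,
    gluePD_inj hkn PDvec_mem_boundedTables PDvec_mem_boundedTables]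

lemma PDvec_swapSeq_eq_gluePD_left (hz : MinAt n z k) (hkn : k ≤ n) {i : ℕ} (hi : 1 ≤ i)
    (hik : i + 1 < k) : PDvec n (swapSeq z i) =
      gluePD n k (PDvec (k - 1) (swapSeq z i)) (PDvec (n - k) (fun j => z (j + k))) := by
  rw [PDvec_eq_gluePD (hz.swapSeq hi (by omega) (by omega) (by omega)) (by omega)]
  congr 1
  exact PDvec_congr fun j hj _ => swapSeq_apply_of_ne (by omega) (by omega)

lemma PDvec_swapSeq_eq_gluePD_right (hz : MinAt n z k) (hk : 1 ≤ k) {i : ℕ} (hi : 1 ≤ i)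
    (hin : i + k + 1 ≤ n) : PDvec n (swapSeq z (i + k)) =
      gluePD n k (PDvec (k - 1) z) (PDvec (n - k) (swapSeq (fun j => z (j + k)) i)) := by
  rw [PDvec_eq_gluePD (hz.swapSeq (by omega) hin (by omega) (by omega)) hk, swapSeq_shift]
  congr 1
  exact PDvec_congr fun j _ hj => swapSeq_apply_of_ne (by omega) (by omega)

end Glue

lemma exists_minAt_of_sides {n k : ℕ} {a b : ℕ → ℤ} (ha : IsSeq (k - 1) a)
    (hb : IsSeq (n - k) b) :
    ∃ z, IsSeq n z ∧ MinAt n z k ∧ (∃ c, ∀ j, 1 ≤ j → j ≤ k - 1 → z j = a j + c) ∧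
      ∃ c, ∀ j, 1 ≤ j → j ≤ n - k → z (j + k) = b j + c := by
  obtain ⟨L, hL⟩ := ((Set.finite_Icc 1 (k - 1)).image a).bddBelow
  obtain ⟨U, hU⟩ := ((Set.finite_Icc 1 (k - 1)).image a).bddAbove
  obtain ⟨L', hL'⟩ := ((Set.finite_Icc 1 (n - k)).image b).bddBelow
  set C := max (U - L + 1) 1
  have hC : U - L + 1 ≤ C ∧ 1 ≤ C := ⟨le_max_left _ _, le_max_right _ _⟩
  let z : ℕ → ℤ := fun j => if j < k then a j + (1 - L) else if j = k then 0
    else b (j - k) + (C + 1 - L')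
  have hleft : ∀ j, 1 ≤ j → j < k → z j = a j + (1 - L) := fun j _ hj => if_pos hj
  have hright : ∀ j, k < j → z j = b (j - k) + (C + 1 - L') := fun j hj => by
    simp only [z, if_neg (show ¬ j < k by omega), if_neg (show j ≠ k by omega)]
  have hroot : z k = 0 := by simp [z]
  have hval : ∀ j, 1 ≤ j → j ≤ n →
      (j < k ∧ 1 ≤ z j ∧ z j ≤ C) ∨ (j = k ∧ z j = 0) ∨ (k < j ∧ C < z j) := by
    intro j hj hjn
    rcases lt_trichotomy j k with hjk | rfl | hjk
    · have := hL ⟨j, ⟨hj, by omega⟩, rfl⟩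
      have := hU ⟨j, ⟨hj, by omega⟩, rfl⟩
      exact Or.inl ⟨hjk, by rw [hleft j hj hjk]; omega⟩
    · exact Or.inr (Or.inl ⟨rfl, hroot⟩)
    · have := hL' ⟨j - k, ⟨by omega, by omega⟩, rfl⟩
      exact Or.inr (Or.inr ⟨hjk, by rw [hright j hjk]; omega⟩)
  refine ⟨z, fun p hp q hq h => ?_, fun j hj hjn hjk => ?_, ⟨1 - L, fun j hj hjk => hleft j hj
    (by omega)⟩, ⟨C + 1 - L', fun j hj _ => by rw [hright _ (by omega), Nat.add_sub_cancel]⟩⟩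
  · simp only [Set.mem_Icc] at hp hq
    rcases hval p hp.1 hp.2 with ⟨hpk, hpz⟩ | ⟨hpk, hpz⟩ | ⟨hpk, hpz⟩ <;>
      rcases hval q hq.1 hq.2 with ⟨hqk, hqz⟩ | ⟨hqk, hqz⟩ | ⟨hqk, hqz⟩
    case inl.inl =>
      rw [hleft p hp.1 hpk, hleft q hq.1 hqk, add_left_inj] at h
      exact ha ⟨hp.1, by omega⟩ ⟨hq.1, by omega⟩ h
    case inr.inr.inr.inr =>
      rw [hright p hpk, hright q hqk, add_left_inj] at h
      have := hb (Set.mem_Icc.2 ⟨by omega, by omega⟩) (Set.mem_Icc.2 ⟨by omega, by omega⟩) h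
      omega
    all_goals omega
  · rcases hval j hj hjn with ⟨-, hjz⟩ | ⟨hjk', -⟩ | ⟨-, hjz⟩
    all_goals omega

section Sides

variable {n k i : ℕ} {x : ℕ → ℤ}

lemma NGat_eq_image_left (hx : IsSeq n x) (hmin : MinAt n x k) (hk : 1 ≤ k) (hkn : k ≤ n)
    (hi : 1 ≤ i) (hik : i + 1 < k) :
    NGat n x i =
      (fun P => gluePD n k P (PDvec (n - k) (fun j => x (j + k)))) '' NGat (k - 1) x i := by
  ext P
  constructor
  · rintro ⟨-, -, z, hz, hzx, rfl⟩
    have hzmin := hmin.of_PDvec_eq hk hkn hz hzx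
    obtain ⟨hleft, hright⟩ := (PDvec_eq_iff_of_minAt hzmin hmin hk hkn).1 hzx
    refine ⟨_, ⟨hi, by omega, z, hz.mono (by omega), hleft, rfl⟩, ?_⟩
    rw [PDvec_swapSeq_eq_gluePD_left hzmin hkn hi hik, hright]
  · rintro ⟨_, ⟨-, -, z', hz', hz'x, rfl⟩, rfl⟩
    obtain ⟨z, hz, hzmin, ⟨c, hzl⟩, ⟨c', hzr⟩⟩ := exists_minAt_of_sides hz' (hx.shift k)
    refine ⟨hi, by omega, z, hz, ?_, ?_⟩
    · rw [PDvec_eq_iff_of_minAt hzmin hmin hk hkn, PDvec_congr_add c hzl,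
        PDvec_congr_add c' hzr]
      exact ⟨hz'x, rfl⟩
    · rw [PDvec_swapSeq_eq_gluePD_left hzmin hkn hi hik, PDvec_congr_add c' hzr,
        PDvec_congr_add c (swapSeq_congr_add hi (by omega) hzl)]

lemma NGat_add_eq_image_right (hx : IsSeq n x) (hmin : MinAt n x k) (hk : 1 ≤ k)
    (hkn : k ≤ n) (hi : 1 ≤ i) (hin : i + k + 1 ≤ n) :
    NGat n x (i + k) =
      gluePD n k (PDvec (k - 1) x) '' NGat (n - k) (fun j => x (j + k)) i := by
  ext P
  constructor
  · rintro ⟨-, -, z, hz, hzx, rfl⟩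
    have hzmin := hmin.of_PDvec_eq hk hkn hz hzx
    obtain ⟨hleft, hright⟩ := (PDvec_eq_iff_of_minAt hzmin hmin hk hkn).1 hzx
    refine ⟨_, ⟨hi, by omega, _, hz.shift k, hright, rfl⟩, ?_⟩
    rw [PDvec_swapSeq_eq_gluePD_right hzmin hk hi hin, hleft]
  · rintro ⟨_, ⟨-, -, w, hw, hwx, rfl⟩, rfl⟩
    obtain ⟨z, hz, hzmin, ⟨c, hzl⟩, ⟨c', hzr⟩⟩ :=
      exists_minAt_of_sides (hx.mono (by omega)) hw
    refine ⟨by omega, by omega, z, hz, ?_, ?_⟩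
    · rw [PDvec_eq_iff_of_minAt hzmin hmin hk hkn, PDvec_congr_add c hzl,
        PDvec_congr_add c' hzr]
      exact ⟨rfl, hwx⟩
    · rw [PDvec_swapSeq_eq_gluePD_right hzmin hk hi hin, PDvec_congr_add c hzl,
        PDvec_congr_add c' (swapSeq_congr_add hi (by omega) hzr)]

end Sides

section Count

variable {n i j : ℕ} {x : ℕ → ℤ}

lemma fwdPD_swapSeq_add_one_ne {z : ℕ → ℤ} (hi : 1 ≤ i) (hne : z i ≠ z (i + 1)) :
    fwdPD (swapSeq z i) (i + 1) ≠ fwdPD z (i + 1) := fun h => by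
  have hz := fwdPD_add_one_eq_one_iff (w := z) hi
  have hs := fwdPD_add_one_eq_one_iff (w := swapSeq z i) hi
  rw [h, swapSeq_apply_left, swapSeq_apply_right] at hs
  omega

lemma disjoint_NGat_of_add_two_le (hij : i + 2 ≤ j) : Disjoint (NGat n x i) (NGat n x j) := by
  rw [Set.disjoint_left]
  rintro _ ⟨hi, hin, z, hz, hzx, rfl⟩ ⟨-, -, u, -, hux, hP⟩
  refine fwdPD_swapSeq_add_one_ne hi (hz.ne ⟨hi, by omega⟩ ⟨by omega, hin⟩ (by omega)) ?_
  calc fwdPD (swapSeq z i) (i + 1) = fwdPD (swapSeq u j) (i + 1) :=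
        PDvec_eq_PDvec_iff.1 hP _ (by omega) hin
    _ = fwdPD u (i + 1) := fwdPD_congr_add 0 fun l _ hl => by
        rw [swapSeq_apply_of_ne (by omega) (by omega), add_zero]
    _ = fwdPD z (i + 1) :=
        ((PDvec_eq_PDvec_iff.1 hux _ (by omega) hin).trans
          (PDvec_eq_PDvec_iff.1 hzx _ (by omega) hin).symm)

lemma disjoint_NGat_succ : Disjoint (NGat n x i) (NGat n x (i + 1)) := by
  rw [Set.disjoint_left]
  rintro _ ⟨hi, -, z, hz, hzx, rfl⟩ ⟨-, hin, u, -, hux, hP⟩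
  have hzu : ∀ p, 1 ≤ p → p ≤ n → fwdPD z p = fwdPD u p := fun p hp hpn =>
    (PDvec_eq_PDvec_iff.1 hzx p hp hpn).trans (PDvec_eq_PDvec_iff.1 hux p hp hpn).symm
  have hsw := PDvec_eq_PDvec_iff.1 hP
  -- the tables at `i + 1` and `i + 2` before and after the two swaps are incompatible,
  -- whatever the relative order of the values at `i`, `i + 1`, `i + 2`
  have hz3 := fwdPD_eq_one_two_iff (w := z) hi
  have hu3 := fwdPD_eq_one_two_iff (w := u) hi
  have hsz3 := fwdPD_eq_one_two_iff (w := swapSeq z i) hi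
  have hsu3 := fwdPD_eq_one_two_iff (w := swapSeq u (i + 1)) hi
  simp only [swapSeq, ↓reduceIte, Nat.add_eq_left, one_ne_zero, Nat.add_left_cancel_iff,
    OfNat.ofNat_ne_zero, OfNat.ofNat_ne_one, not_lt, Nat.left_eq_add, add_assoc,
    Nat.reduceAdd] at hsz3 hsu3
  have := hzu (i + 1) (by omega) (by omega)
  have := hzu (i + 2) (by omega) (by omega)
  have := hsw (i + 1) (by omega) (by omega)
  have := hsw (i + 2) (by omega) (by omega)
  have := hz.ne ⟨hi, by omega⟩ ⟨by omega, by omega⟩ (show i ≠ i + 1 by omega)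
  omega

lemma disjoint_NGat (hij : i ≠ j) : Disjoint (NGat n x i) (NGat n x j) := by
  wlog h : i < j generalizing i j
  · exact (this hij.symm (by omega)).symm
  obtain rfl | hij' := (show j = i + 1 ∨ i + 2 ≤ j by omega)
  · exact disjoint_NGat_succ
  · exact disjoint_NGat_of_add_two_le hij'

lemma NGat_eq_empty (h : ¬ (1 ≤ i ∧ i + 1 ≤ n)) : NGat n x i = ∅ :=
  Set.eq_empty_of_forall_notMem fun _ hP => h ⟨hP.1, hP.2.1⟩

lemma NGat_subset_boundedTables : NGat n x i ⊆ boundedTables n :=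
  fun _ ⟨_, _, _, _, _, hP⟩ => hP ▸ PDvec_mem_boundedTables

lemma NGat_finite : (NGat n x i).Finite :=
  (boundedTables_finite n).subset NGat_subset_boundedTables

lemma NG_eq_biUnion : NG n x = ⋃ i ∈ (Finset.Icc 1 (n - 1) : Set ℕ), NGat n x i := by
  ext P
  simp only [NG, Set.mem_iUnion, Finset.coe_Icc, Set.mem_Icc, exists_prop]
  exact ⟨fun ⟨i, hP⟩ => ⟨i, ⟨hP.1, by have := hP.2.1; omega⟩, hP⟩, fun ⟨i, _, hP⟩ => ⟨i, hP⟩⟩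

lemma ncard_NG : (NG n x).ncard = ∑ i ∈ Finset.Icc 1 (n - 1), (NGat n x i).ncard := by
  rw [NG_eq_biUnion, Set.Finite.ncard_biUnion (Finset.finite_toSet _) (fun _ _ => NGat_finite)
    fun _ _ _ _ hij => disjoint_NGat hij, finsum_mem_coe_finset]

end Count

lemma sum_Icc_eq_add_add_add {M : Type*} [AddCommMonoid M] {n k : ℕ} (g : ℕ → M)
    (hk : 1 ≤ k) (hkn : k ≤ n) (hg : ∀ i, ¬ (1 ≤ i ∧ i + 1 ≤ n) → g i = 0) :
    ∑ i ∈ Finset.Icc 1 (n - 1), g i = ∑ i ∈ Finset.Icc 1 (k - 2), g i + g (k - 1) + g k +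
      ∑ i ∈ Finset.Icc (k + 1) (n - 1), g i := by
  have extend : ∀ s t : Finset ℕ, s ⊆ t → (∀ i ∈ t, i ∉ s → ¬ (1 ≤ i ∧ i + 1 ≤ n)) →
      ∑ i ∈ s, g i = ∑ i ∈ t, g i := fun s t hst hout =>
    Finset.sum_subset hst fun i hi hi' => hg i (hout i hi hi')
  rw [extend (Finset.Icc 1 (n - 1)) (Finset.range (n + 1))
      (fun i => by simp only [Finset.mem_Icc, Finset.mem_range]; omega)
      (fun i => by simp only [Finset.mem_Icc, Finset.mem_range]; omega),
    extend (Finset.Icc 1 (k - 2)) (Finset.range (k - 1))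
      (fun i => by simp only [Finset.mem_Icc, Finset.mem_range]; omega)
      (fun i => by simp only [Finset.mem_Icc, Finset.mem_range]; omega),
    extend (Finset.Icc (k + 1) (n - 1)) (Finset.Ico (k + 1) (n + 1))
      (fun i => by simp only [Finset.mem_Icc, Finset.mem_Ico]; omega)
      (fun i => by simp only [Finset.mem_Icc, Finset.mem_Ico]; omega),
    ← Finset.sum_range_add_sum_Ico _ (show k - 1 ≤ n + 1 by omega),
    Finset.sum_eq_sum_Ico_succ_bot (by omega), Nat.sub_add_cancel hk,
    Finset.sum_eq_sum_Ico_succ_bot (by omega), add_assoc, add_assoc]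

section SideSums

variable {n k : ℕ} {x : ℕ → ℤ}

lemma sum_ncard_NGat_left (hx : IsSeq n x) (hmin : MinAt n x k) (hk : 1 ≤ k) (hkn : k ≤ n) :
    ∑ i ∈ Finset.Icc 1 (k - 2), (NGat n x i).ncard = (NG (k - 1) x).ncard := by
  rw [ncard_NG, show k - 1 - 1 = k - 2 by omega]
  refine Finset.sum_congr rfl fun i hi => ?_
  rw [Finset.mem_Icc] at hi
  rw [NGat_eq_image_left hx hmin hk hkn hi.1 (by omega), Set.InjOn.ncard_image]
  exact fun P _ P' _ h =>
    ((gluePD_inj hkn PDvec_mem_boundedTables PDvec_mem_boundedTables).1 h).1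

lemma sum_ncard_NGat_right (hx : IsSeq n x) (hmin : MinAt n x k) (hk : 1 ≤ k) (hkn : k ≤ n) :
    ∑ i ∈ Finset.Icc (k + 1) (n - 1), (NGat n x i).ncard =
      (NG (n - k) (fun j => x (j + k))).ncard := by
  rw [ncard_NG]
  refine Finset.sum_nbij' (· - k) (· + k) (fun i hi => ?_) (fun i hi => ?_) (fun i hi => ?_)
    (fun i _ => Nat.add_sub_cancel i k) fun i hi => ?_
  all_goals simp only [Finset.mem_Icc] at hi ⊢
  any_goals omega
  rw [← Nat.sub_add_cancel (show k ≤ i by omega), Nat.add_sub_cancel,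
    NGat_add_eq_image_right hx hmin hk hkn (by omega) (by omega), Set.InjOn.ncard_image]
  exact fun Q hQ Q' hQ' h => ((gluePD_inj hkn (NGat_subset_boundedTables hQ)
    (NGat_subset_boundedTables hQ')).1 h).2

end SideSums

theorem stmt12 (n k : ℕ) (x : ℕ → ℤ) (hx : IsSeq n x)
    (hk1 : 1 ≤ k) (hk2 : k ≤ n)
    (hmin : ∀ j, 1 ≤ j → j ≤ n → j ≠ k → x k < x j) :
    (NG n x).ncard =
      (NG (k - 1) x).ncard + (NG (n - k) (fun j => x (j + k))).ncard +
        (NGat n x (k - 1)).ncard + (NGat n x k).ncard ∧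
    ∑ i ∈ Finset.Icc 1 (k - 2), (NGat n x i).ncard = (NG (k - 1) x).ncard ∧
    ∑ i ∈ Finset.Icc (k + 1) (n - 1), (NGat n x i).ncard
      = (NG (n - k) (fun j => x (j + k))).ncard := by
  have left := sum_ncard_NGat_left hx hmin hk1 hk2
  have right := sum_ncard_NGat_right hx hmin hk1 hk2
  refine ⟨?_, left, right⟩
  rw [ncard_NG, sum_Icc_eq_add_add_add _ hk1 hk2 fun i hi => by rw [NGat_eq_empty hi,
    Set.ncard_empty], left, right]
  ring
end
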